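/- arXiv:1210.6581 — 4 statements merged into one kernel-verified Lean document; each statement's English description precedes it below -/
import Mathlib

section
/- Shearer's Lemma: Let X = (X_1, ..., X_p) be a random variable taking values in S_1 × ⋯ × S_p, and let 𝒜 be a collection of subsets of [p] such that each element of [p] appears in at least k members of 𝒜. Then H(X) ≤ (1/k) Σ_{A ∈ 𝒜} H(X_A), where X_A denotes X restricted to the coordinates in A. -/
open scoped Classical

/-- Shannon entropy (base 2) of a probability mass function on a finite type. -/
noncomputable def shannonEntropy {α : Type*} [Fintype α] (μ : α → ℝ) : ℝ :=
  -∑ x, μ x * Real.logb 2 (μ x)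

/-- The marginal distribution of a pmf on a product, restricted to coordinates in `A`. -/
noncomputable def marginal {p : ℕ} {S : Fin p → Type*} [∀ i, Fintype (S i)]
    (μ : (∀ i, S i) → ℝ) (A : Finset (Fin p)) : (∀ i : A, S i) → ℝ :=
  fun y => ∑ x : ∀ i, S i, if (∀ i : A, x i = y i) then μ x else 0

namespace ShearerAux

open Finset

variable {p : ℕ} {S : Fin p → Type*} [∀ i, Fintype (S i)]

/-- Marginal as a function on the full space. -/
noncomputable def G (μ : (∀ i, S i) → ℝ) (C : Finset (Fin p)) (x : ∀ i, S i) : ℝ :=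
  ∑ x' : ∀ i, S i, if (∀ j ∈ C, x' j = x j) then μ x' else 0

noncomputable def F (μ : (∀ i, S i) → ℝ) (C : Finset (Fin p)) : ℝ :=
  -∑ x, μ x * Real.logb 2 (G μ C x)

variable {μ : (∀ i, S i) → ℝ} {A B C D : Finset (Fin p)} {x y z : ∀ i, S i} {i j : Fin p}

lemma G_nonneg (hμ0 : ∀ x, 0 ≤ μ x) : 0 ≤ G μ C x := by
  refine Finset.sum_nonneg fun x' _ => ?_
  split
  · exact hμ0 x'
  · exact le_refl 0

lemma le_G (hμ0 : ∀ x, 0 ≤ μ x) : μ x ≤ G μ C x := by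
  have h := Finset.single_le_sum
    (f := fun x' => if (∀ j ∈ C, x' j = x j) then μ x' else 0)
    (fun x' _ => by split; exacts [hμ0 x', le_refl 0]) (Finset.mem_univ x)
  simpa [G] using h

lemma G_antitone (hμ0 : ∀ x, 0 ≤ μ x) (hCD : C ⊆ D) : G μ D x ≤ G μ C x := by
  refine Finset.sum_le_sum fun x' _ => ?_
  split_ifs with h1 h2
  · exact le_refl _
  · exact absurd (fun j hj => h1 j (hCD hj)) h2
  · exact hμ0 x'
  · exact le_refl 0

lemma G_congr (h : ∀ j ∈ C, x j = y j) : G μ C x = G μ C y := by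
  refine Finset.sum_congr rfl fun x' _ => ?_
  refine if_congr ?_ rfl rfl
  constructor
  · exact fun hh j hj => (hh j hj).trans (h j hj)
  · exact fun hh j hj => (hh j hj).trans (h j hj).symm

lemma G_univ : G μ Finset.univ x = μ x := by
  unfold G
  have : ∀ x' : ∀ i, S i, (∀ j ∈ (Finset.univ : Finset (Fin p)), x' j = x j) ↔ x' = x := by
    intro x'
    constructor
    · intro h; funext j; exact h j (Finset.mem_univ j)
    · intro h j _; rw [h]
  calc (∑ x' : ∀ i, S i, if (∀ j ∈ (Finset.univ : Finset (Fin p)), x' j = x j) then μ x' else 0)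
      = ∑ x' : ∀ i, S i, (if x' = x then μ x' else 0) :=
        Finset.sum_congr rfl fun x' _ => if_congr (this x') rfl rfl
    _ = μ x := by rw [Finset.sum_ite_eq' Finset.univ x μ]; simp

lemma marginal_eq_G : marginal μ A (fun i : A => x i) = G μ A x := by
  refine Finset.sum_congr rfl fun x' _ => ?_
  refine if_congr ?_ rfl rfl
  exact ⟨fun h j hj => h ⟨j, hj⟩, fun h i => h i i.2⟩

lemma bridge : shannonEntropy (marginal μ A) = F μ A := by
  unfold shannonEntropy F
  congr 1
  calc ∑ y, marginal μ A y * Real.logb 2 (marginal μ A y)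
      = ∑ y, ∑ x : ∀ i, S i,
          (if (∀ i : A, x i = y i) then μ x * Real.logb 2 (marginal μ A y) else 0) := by
        refine Finset.sum_congr rfl fun y _ => ?_
        rw [marginal, Finset.sum_mul]
        exact Finset.sum_congr rfl fun x _ => by rw [ite_mul, zero_mul]
    _ = ∑ x : ∀ i, S i, ∑ y,
          (if (∀ i : A, x i = y i) then μ x * Real.logb 2 (marginal μ A y) else 0) :=
        Finset.sum_comm
    _ = ∑ x, μ x * Real.logb 2 (G μ A x) := by
        refine Finset.sum_congr rfl fun x _ => ?_
        have h1 : ∀ y : ∀ i : A, S i, (∀ i : A, x i = y i) ↔ (fun i : A => x i) = y := by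
          intro y
          constructor
          · intro h; funext i; exact h i
          · intro h i; exact congrFun h i
        calc ∑ y, (if (∀ i : A, x i = y i) then μ x * Real.logb 2 (marginal μ A y) else 0)
            = ∑ y, (if (fun i : A => x i) = y then μ x * Real.logb 2 (marginal μ A y) else 0) :=
              Finset.sum_congr rfl fun y _ => if_congr (h1 y) rfl rfl
          _ = μ x * Real.logb 2 (marginal μ A (fun i : A => x i)) := by
              rw [Finset.sum_ite_eq Finset.univ (fun i : A => x i)
                (fun y => μ x * Real.logb 2 (marginal μ A y))]
              simp
          _ = μ x * Real.logb 2 (G μ A x) := by rw [marginal_eq_G]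

lemma G_empty (hμ1 : ∑ x, μ x = 1) : G μ (∅ : Finset (Fin p)) x = 1 := by
  unfold G
  simp [hμ1]

lemma F_empty (hμ1 : ∑ x, μ x = 1) : F μ (∅ : Finset (Fin p)) = 0 := by
  unfold F
  simp [G_empty hμ1]

lemma F_mono (hμ0 : ∀ x, 0 ≤ μ x) (hBA : B ⊆ A) : F μ B ≤ F μ A := by
  unfold F
  rw [neg_le_neg_iff]
  refine Finset.sum_le_sum fun x _ => ?_
  rcases (hμ0 x).eq_or_lt with h | h
  · rw [← h]; simp
  · refine mul_le_mul_of_nonneg_left ?_ (le_of_lt h)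
    exact Real.logb_le_logb_of_le one_lt_two (lt_of_lt_of_le h (le_G hμ0))
      (G_antitone hμ0 hBA)


section P

variable (x₀ : ∀ i, S i)

/-- Fill coordinates outside `C` with a fixed point. -/
def P (C : Finset (Fin p)) (x : ∀ i, S i) : ∀ i, S i :=
  fun j => if j ∈ C then x j else x₀ j

lemma P_agree (hj : j ∈ C) : P x₀ C x j = x j := if_pos hj

lemma P_idem : P x₀ C (P x₀ C x) = P x₀ C x := by
  funext j
  by_cases h : j ∈ C <;> simp [P, h]

lemma G_P_subset (hDC : D ⊆ C) : G μ D (P x₀ C x) = G μ D x :=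
  G_congr fun j hj => P_agree x₀ (hDC hj)

lemma sum_mu_fiber (hμ0 : ∀ x, 0 ≤ μ x) :
    ∑ x ∈ Finset.univ.filter (fun x => P x₀ C x = z), μ x
      = if P x₀ C z = z then G μ C z else 0 := by
  by_cases hz : P x₀ C z = z
  · rw [if_pos hz, Finset.sum_filter]
    refine Finset.sum_congr rfl fun x _ => ?_
    refine if_congr ?_ rfl rfl
    constructor
    · intro h j hj
      rw [← h]; exact (P_agree x₀ hj).symm
    · intro h
      funext j
      by_cases hj : j ∈ C
      · rw [P_agree x₀ hj, h j hj]
      · show (if j ∈ C then x j else x₀ j) = z j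
        rw [if_neg hj]
        have := congrFun hz j
        simpa [P, if_neg hj] using this
  · rw [if_neg hz]
    refine Finset.sum_eq_zero fun x hx => ?_
    exfalso
    apply hz
    have hpx : P x₀ C x = z := (Finset.mem_filter.1 hx).2
    calc P x₀ C z = P x₀ C (P x₀ C x) := by rw [hpx]
      _ = P x₀ C x := P_idem x₀
      _ = z := hpx

lemma sum_G_fix (hμ1 : ∑ x, μ x = 1) :
    ∑ w ∈ Finset.univ.filter (fun w => P x₀ A w = w), G μ A w = 1 := by
  unfold G
  rw [Finset.sum_comm]
  rw [← hμ1]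
  refine Finset.sum_congr rfl fun x' _ => ?_
  refine Finset.sum_eq_single_of_mem (P x₀ A x') ?_ ?_ |>.trans ?_
  · exact Finset.mem_filter.2 ⟨Finset.mem_univ _, P_idem x₀⟩
  · intro w hw hne
    rw [if_neg]
    intro h
    apply hne
    have hfix : P x₀ A w = w := (Finset.mem_filter.1 hw).2
    funext j
    by_cases hj : j ∈ A
    · rw [P_agree x₀ hj]
      exact (h j hj).symm
    · have h1 : w j = x₀ j := by
        have := congrFun hfix j
        simpa [P, if_neg hj] using this.symm
      rw [h1]
      show x₀ j = (if j ∈ A then x' j else x₀ j)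
      rw [if_neg hj]
  · rw [if_pos]
    intro j hj
    exact (P_agree x₀ hj).symm

lemma sum_update_G (hiB : i ∉ B) :
    ∑ s : S i, G μ (insert i B) (Function.update x i s) = G μ B x := by
  unfold G
  rw [Finset.sum_comm]
  refine Finset.sum_congr rfl fun x' _ => ?_
  have key : ∀ s : S i, (∀ j ∈ insert i B, x' j = Function.update x i s j)
      ↔ (x' i = s ∧ ∀ j ∈ B, x' j = x j) := by
    intro s
    rw [Finset.forall_mem_insert]
    constructor
    · rintro ⟨h1, h2⟩
      refine ⟨by simpa using h1, fun j hj => ?_⟩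
      have hji : j ≠ i := fun h => hiB (h ▸ hj)
      simpa [Function.update_of_ne hji] using h2 j hj
    · rintro ⟨h1, h2⟩
      refine ⟨by simpa using h1, fun j hj => ?_⟩
      have hji : j ≠ i := fun h => hiB (h ▸ hj)
      simp [Function.update_of_ne hji, h2 j hj]
  calc (∑ s : S i, if (∀ j ∈ insert i B, x' j = Function.update x i s j) then μ x' else 0)
      = ∑ s : S i, (if (x' i = s ∧ ∀ j ∈ B, x' j = x j) then μ x' else 0) :=
        Finset.sum_congr rfl fun s _ => if_congr (key s) rfl rfl
    _ = ∑ s : S i, (if x' i = s then (if (∀ j ∈ B, x' j = x j) then μ x' else 0) else 0) := by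
        refine Finset.sum_congr rfl fun s _ => ?_
        by_cases h1 : x' i = s <;> by_cases h2 : ∀ j ∈ B, x' j = x j <;>
          simp [h1, h2]
    _ = (if (∀ j ∈ B, x' j = x j) then μ x' else 0) := by
        rw [Finset.sum_ite_eq Finset.univ (x' i)
          (fun _ => if (∀ j ∈ B, x' j = x j) then μ x' else 0)]
        simp

end P


lemma step2 (x₀ : ∀ i, S i) (hμ0 : ∀ x, 0 ≤ μ x) (hμ1 : ∑ x, μ x = 1)
    (hBA : B ⊆ A) (hiA : i ∉ A) :
    ∑ x, μ x * (G μ A x * G μ (insert i B) x / (G μ (insert i A) x * G μ B x)) ≤ 1 := by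
  set C := insert i A with hC
  have hAC : A ⊆ C := Finset.subset_insert i A
  have hBC : B ⊆ C := hBA.trans hAC
  have hiBC : insert i B ⊆ C := Finset.insert_subset_insert i hBA
  have hiB : i ∉ B := fun h => hiA (hBA h)
  set h : (∀ i, S i) → ℝ :=
    fun x => G μ A x * G μ (insert i B) x / (G μ C x * G μ B x) with hh
  have hhP : ∀ x, h (P x₀ C x) = h x := by
    intro x
    simp only [hh, G_P_subset x₀ hAC, G_P_subset x₀ hBC, G_P_subset x₀ hiBC,
      G_P_subset x₀ (Finset.Subset.refl C)]
  calc ∑ x, μ x * h x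
      = ∑ z, ∑ x ∈ Finset.univ.filter (fun x => P x₀ C x = z), μ x * h x :=
        (Finset.sum_fiberwise Finset.univ (P x₀ C) (fun x => μ x * h x)).symm
    _ = ∑ z, (if P x₀ C z = z then G μ C z else 0) * h z := by
        refine Finset.sum_congr rfl fun z _ => ?_
        rw [← sum_mu_fiber x₀ hμ0, Finset.sum_mul]
        refine Finset.sum_congr rfl fun x hx => ?_
        have hz : P x₀ C x = z := (Finset.mem_filter.1 hx).2
        rw [← hz, hhP x]
    _ = ∑ z ∈ Finset.univ.filter (fun z => P x₀ C z = z), G μ C z * h z := by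
        rw [Finset.sum_filter]
        exact Finset.sum_congr rfl fun z _ => by rw [ite_mul, zero_mul]
    _ ≤ ∑ z ∈ Finset.univ.filter (fun z => P x₀ C z = z),
          G μ A z * G μ (insert i B) z / G μ B z := by
        refine Finset.sum_le_sum fun z _ => ?_
        by_cases h0 : G μ C z = 0
        · rw [h0, zero_mul]
          exact div_nonneg (mul_nonneg (G_nonneg hμ0) (G_nonneg hμ0)) (G_nonneg hμ0)
        by_cases hB0 : G μ B z = 0
        · have hiB0 : G μ (insert i B) z = 0 :=
            le_antisymm (hB0 ▸ G_antitone hμ0 (Finset.subset_insert i B)) (G_nonneg hμ0)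
          simp [hh, hB0, hiB0]
        refine le_of_eq ?_
        rw [hh]
        field_simp
    _ = ∑ q ∈ (Finset.univ.filter (fun w => P x₀ A w = w)) ×ˢ (Finset.univ : Finset (S i)),
          G μ A (Function.update q.1 i q.2) * G μ (insert i B) (Function.update q.1 i q.2)
            / G μ B (Function.update q.1 i q.2) := by
        refine Finset.sum_bij' (fun z _ => (P x₀ A z, z i))
          (fun q _ => Function.update q.1 i q.2) ?_ ?_ ?_ ?_ ?_
        · intro z hz
          exact Finset.mem_product.2 ⟨Finset.mem_filter.2 ⟨Finset.mem_univ _, P_idem x₀⟩,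
            Finset.mem_univ _⟩
        · intro q hq
          have hw : P x₀ A q.1 = q.1 := (Finset.mem_filter.1 (Finset.mem_product.1 hq).1).2
          refine Finset.mem_filter.2 ⟨Finset.mem_univ _, ?_⟩
          funext jj
          by_cases hjC : jj ∈ C
          · exact P_agree x₀ hjC
          · have hji : jj ≠ i := fun h => hjC (h ▸ Finset.mem_insert_self i A)
            have hjA : jj ∉ A := fun h => hjC (Finset.mem_insert_of_mem h)
            show (if jj ∈ C then _ else x₀ jj) = _
            rw [if_neg hjC, Function.update_of_ne hji]
            have := congrFun hw jj
            simpa [P, if_neg hjA] using this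
        · intro z hz
          dsimp only
          have hfix : P x₀ C z = z := (Finset.mem_filter.1 hz).2
          funext jj
          by_cases hji : jj = i
          · subst hji; rw [Function.update_self]
          · rw [Function.update_of_ne hji]
            by_cases hjA : jj ∈ A
            · exact P_agree x₀ hjA
            · have hjC : jj ∉ C := by
                intro h
                rcases Finset.mem_insert.1 h with h | h
                exacts [hji h, hjA h]
              show (if jj ∈ A then z jj else x₀ jj) = z jj
              rw [if_neg hjA]
              have := congrFun hfix jj
              simpa [P, if_neg hjC] using this
        · intro q hq
          have hw : P x₀ A q.1 = q.1 := (Finset.mem_filter.1 (Finset.mem_product.1 hq).1).2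
          have h2 : Function.update q.1 i q.2 i = q.2 := Function.update_self i q.2 q.1
          refine Prod.ext ?_ h2
          show P x₀ A (Function.update q.1 i q.2) = q.1
          funext jj
          by_cases hjA : jj ∈ A
          · have hji : jj ≠ i := fun h => hiA (h ▸ hjA)
            rw [P_agree x₀ hjA, Function.update_of_ne hji]
          · show (if jj ∈ A then _ else x₀ jj) = q.1 jj
            rw [if_neg hjA]
            have := congrFun hw jj
            simpa [P, if_neg hjA] using this
        · intro z hz
          dsimp only
          have hfix : P x₀ C z = z := (Finset.mem_filter.1 hz).2
          have hrec : Function.update (P x₀ A z) i (z i) = z := by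
            funext jj
            by_cases hji : jj = i
            · subst hji; rw [Function.update_self]
            · rw [Function.update_of_ne hji]
              by_cases hjA : jj ∈ A
              · exact P_agree x₀ hjA
              · have hjC : jj ∉ C := by
                  intro h
                  rcases Finset.mem_insert.1 h with h | h
                  exacts [hji h, hjA h]
                show (if jj ∈ A then z jj else x₀ jj) = z jj
                rw [if_neg hjA]
                have := congrFun hfix jj
                simpa [P, if_neg hjC] using this
          simp only [hrec]
    _ = ∑ w ∈ Finset.univ.filter (fun w => P x₀ A w = w), ∑ s : S i,
          G μ A (Function.update w i s) * G μ (insert i B) (Function.update w i s)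
            / G μ B (Function.update w i s) := by rw [Finset.sum_product]
    _ ≤ ∑ w ∈ Finset.univ.filter (fun w => P x₀ A w = w), G μ A w := by
        refine Finset.sum_le_sum fun w _ => ?_
        have hupdA : ∀ s : S i, G μ A (Function.update w i s) = G μ A w := fun s =>
          G_congr fun j hj => Function.update_of_ne (fun h => hiA (by rw [← h]; exact hj)) s w
        have hupdB : ∀ s : S i, G μ B (Function.update w i s) = G μ B w := fun s =>
          G_congr fun j hj => Function.update_of_ne (fun h => hiB (by rw [← h]; exact hj)) s w
        calc ∑ s : S i, G μ A (Function.update w i s)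
                * G μ (insert i B) (Function.update w i s) / G μ B (Function.update w i s)
            = ∑ s : S i, G μ A w * G μ (insert i B) (Function.update w i s) / G μ B w := by
              refine Finset.sum_congr rfl fun s _ => ?_
              rw [hupdA s, hupdB s]
          _ = G μ A w * (∑ s : S i, G μ (insert i B) (Function.update w i s)) / G μ B w := by
              rw [← Finset.sum_div, ← Finset.mul_sum]
          _ = G μ A w * G μ B w / G μ B w := by rw [sum_update_G hiB]
          _ ≤ G μ A w := by
              by_cases hB0 : G μ B w = 0
              · simp [hB0]
                exact G_nonneg hμ0
              · rw [mul_div_assoc, div_self hB0, mul_one]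
    _ = 1 := sum_G_fix x₀ hμ1

lemma F_submod (x₀ : ∀ i, S i) (hμ0 : ∀ x, 0 ≤ μ x) (hμ1 : ∑ x, μ x = 1)
    (hBA : B ⊆ A) (hiA : i ∉ A) :
    F μ (insert i A) + F μ B ≤ F μ A + F μ (insert i B) := by
  have hlog2 : (0:ℝ) < Real.log 2 := Real.log_pos one_lt_two
  set r : (∀ i, S i) → ℝ :=
    fun x => G μ A x * G μ (insert i B) x / (G μ (insert i A) x * G μ B x) with hr
  have key : ∀ x, μ x * Real.logb 2 (G μ A x) + μ x * Real.logb 2 (G μ (insert i B) x)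
      - μ x * Real.logb 2 (G μ (insert i A) x) - μ x * Real.logb 2 (G μ B x)
      ≤ (1 / Real.log 2) * (μ x * r x - μ x) := by
    intro x
    rcases (hμ0 x).eq_or_lt with h | h
    · rw [← h]; simp
    · have hA : 0 < G μ A x := lt_of_lt_of_le h (le_G hμ0)
      have hB : 0 < G μ B x := lt_of_lt_of_le h (le_G hμ0)
      have hiA' : 0 < G μ (insert i A) x := lt_of_lt_of_le h (le_G hμ0)
      have hiB' : 0 < G μ (insert i B) x := lt_of_lt_of_le h (le_G hμ0)
      have hrpos : 0 < r x := div_pos (mul_pos hA hiB') (mul_pos hiA' hB)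
      have hlogb : Real.logb 2 (r x) = Real.logb 2 (G μ A x)
          + Real.logb 2 (G μ (insert i B) x) - Real.logb 2 (G μ (insert i A) x)
          - Real.logb 2 (G μ B x) := by
        rw [hr]
        rw [Real.logb_div (by positivity) (by positivity),
          Real.logb_mul (ne_of_gt hA) (ne_of_gt hiB'),
          Real.logb_mul (ne_of_gt hiA') (ne_of_gt hB)]
        ring
      have hle : Real.logb 2 (r x) ≤ (r x - 1) / Real.log 2 := by
        rw [Real.logb]
        exact (div_le_div_iff_of_pos_right hlog2).mpr (Real.log_le_sub_one_of_pos hrpos)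
      have heq : μ x * Real.logb 2 (G μ A x) + μ x * Real.logb 2 (G μ (insert i B) x)
          - μ x * Real.logb 2 (G μ (insert i A) x) - μ x * Real.logb 2 (G μ B x)
          = μ x * Real.logb 2 (r x) := by rw [hlogb]; ring
      rw [heq]
      calc μ x * Real.logb 2 (r x) ≤ μ x * ((r x - 1) / Real.log 2) :=
            mul_le_mul_of_nonneg_left hle h.le
        _ = (1 / Real.log 2) * (μ x * r x - μ x) := by ring
  have hT := step2 x₀ hμ0 hμ1 hBA hiA
  have h1 : ∑ x, (μ x * Real.logb 2 (G μ A x) + μ x * Real.logb 2 (G μ (insert i B) x)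
      - μ x * Real.logb 2 (G μ (insert i A) x) - μ x * Real.logb 2 (G μ B x))
      ≤ (1 / Real.log 2) * ((∑ x, μ x * r x) - 1) := by
    calc ∑ x, (μ x * Real.logb 2 (G μ A x) + μ x * Real.logb 2 (G μ (insert i B) x)
        - μ x * Real.logb 2 (G μ (insert i A) x) - μ x * Real.logb 2 (G μ B x))
        ≤ ∑ x, (1 / Real.log 2) * (μ x * r x - μ x) := Finset.sum_le_sum fun x _ => key x
      _ = (1 / Real.log 2) * ((∑ x, μ x * r x) - ∑ x, μ x) := by
          rw [← Finset.mul_sum, Finset.sum_sub_distrib]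
      _ = (1 / Real.log 2) * ((∑ x, μ x * r x) - 1) := by rw [hμ1]
  have h2 : (1 / Real.log 2) * ((∑ x, μ x * r x) - 1) ≤ 0 :=
    mul_nonpos_of_nonneg_of_nonpos (by positivity) (sub_nonpos.mpr hT)
  have h4 : (∑ x, μ x * Real.logb 2 (G μ A x)) + (∑ x, μ x * Real.logb 2 (G μ (insert i B) x))
      - (∑ x, μ x * Real.logb 2 (G μ (insert i A) x)) - (∑ x, μ x * Real.logb 2 (G μ B x))
      ≤ 0 := by
    have h3 := h1.trans h2
    simpa [Finset.sum_add_distrib, Finset.sum_sub_distrib] using h3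
  unfold F
  linarith


lemma telescope (φ : Finset (Fin p) → ℝ) (h0 : φ ∅ = 0) (A : Finset (Fin p)) :
    φ A = ∑ i ∈ A, (φ (A ∩ Finset.Iic i) - φ (A ∩ Finset.Iio i)) := by
  induction A using Finset.strongInduction with
  | _ A ih =>
    rcases A.eq_empty_or_nonempty with rfl | hA
    · simp [h0]
    · set m := A.max' hA with hm'
      have hm : m ∈ A := A.max'_mem hA
      set A' := A.erase m with hA'
      have hss : A' ⊂ A := Finset.erase_ssubset hm
      have hIicm : A ∩ Finset.Iic m = A :=
        Finset.inter_eq_left.2 fun j hj => Finset.mem_Iic.2 (A.le_max' j hj)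
      have hIiom : A ∩ Finset.Iio m = A' := by
        ext j
        simp only [Finset.mem_inter, Finset.mem_Iio, hA', Finset.mem_erase]
        constructor
        · rintro ⟨hj, hlt⟩; exact ⟨ne_of_lt hlt, hj⟩
        · rintro ⟨hne, hj⟩; exact ⟨hj, lt_of_le_of_ne (A.le_max' j hj) hne⟩
      have hstep : ∀ i ∈ A', A ∩ Finset.Iic i = A' ∩ Finset.Iic i ∧
          A ∩ Finset.Iio i = A' ∩ Finset.Iio i := by
        intro i hi
        have him : i < m := lt_of_le_of_ne (A.le_max' i (Finset.mem_of_mem_erase hi))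
          (Finset.ne_of_mem_erase hi)
        constructor
        · ext j
          simp only [Finset.mem_inter, Finset.mem_Iic, hA', Finset.mem_erase]
          constructor
          · rintro ⟨hj, hle⟩
            refine ⟨⟨fun he => ?_, hj⟩, hle⟩
            rw [he] at hle
            exact absurd hle (not_le.2 him)
          · rintro ⟨⟨_, hj⟩, hle⟩; exact ⟨hj, hle⟩
        · ext j
          simp only [Finset.mem_inter, Finset.mem_Iio, hA', Finset.mem_erase]
          constructor
          · rintro ⟨hj, hlt⟩
            refine ⟨⟨fun he => ?_, hj⟩, hlt⟩
            rw [he] at hlt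
            exact absurd hlt (not_lt.2 him.le)
          · rintro ⟨⟨_, hj⟩, hlt⟩; exact ⟨hj, hlt⟩
      rw [← Finset.sum_erase_add A _ hm, hIicm, hIiom]
      have hcongr : ∑ i ∈ A', (φ (A ∩ Finset.Iic i) - φ (A ∩ Finset.Iio i))
          = ∑ i ∈ A', (φ (A' ∩ Finset.Iic i) - φ (A' ∩ Finset.Iio i)) :=
        Finset.sum_congr rfl fun i hi => by rw [(hstep i hi).1, (hstep i hi).2]
      rw [← hA', hcongr, ← ih A' hss]
      ring

end ShearerAux

/-- **Shearer's Lemma**. -/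
theorem shearer {p : ℕ} {S : Fin p → Type*} [∀ i, Fintype (S i)]
    (μ : (∀ i, S i) → ℝ) (hμ0 : ∀ x, 0 ≤ μ x) (hμ1 : ∑ x, μ x = 1)
    (𝒜 : Finset (Finset (Fin p))) (k : ℕ) (hk : 0 < k)
    (hcover : ∀ i : Fin p, k ≤ (𝒜.filter (fun A => i ∈ A)).card) :
    shannonEntropy μ ≤ (1 / k) * ∑ A ∈ 𝒜, shannonEntropy (marginal μ A) := by
  have hne : Nonempty (∀ i, S i) := by
    by_contra h
    rw [not_nonempty_iff] at h
    rw [@Finset.univ_eq_empty _ _ h, Finset.sum_empty] at hμ1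
    exact one_ne_zero hμ1.symm
  obtain ⟨x₀⟩ := hne
  set d : Fin p → ℝ :=
    fun i => ShearerAux.F μ (Finset.Iic i) - ShearerAux.F μ (Finset.Iio i) with hd
  have hd0 : ∀ i, 0 ≤ d i := fun i =>
    sub_nonneg.2 (ShearerAux.F_mono hμ0 Finset.Iio_subset_Iic_self)
  have htel := ShearerAux.telescope (ShearerAux.F μ) (ShearerAux.F_empty hμ1)
  have hFuniv : shannonEntropy μ = ShearerAux.F μ Finset.univ := by
    unfold shannonEntropy ShearerAux.F
    exact congrArg Neg.neg (Finset.sum_congr rfl fun x _ => by rw [ShearerAux.G_univ])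
  have hduniv : ShearerAux.F μ Finset.univ = ∑ i, d i := by
    rw [htel Finset.univ]
    exact Finset.sum_congr rfl fun i _ => by rw [Finset.univ_inter, Finset.univ_inter]
  have hFA : ∀ A : Finset (Fin p), (∑ i ∈ A, d i) ≤ ShearerAux.F μ A := by
    intro A
    rw [htel A]
    refine Finset.sum_le_sum fun i hi => ?_
    have hsub : A ∩ Finset.Iio i ⊆ Finset.Iio i := Finset.inter_subset_right
    have hni : i ∉ Finset.Iio i := by simp
    have hkey := ShearerAux.F_submod x₀ hμ0 hμ1 hsub hni
    have h1 : insert i (Finset.Iio i) = Finset.Iic i := Finset.Iio_insert i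
    have h2 : insert i (A ∩ Finset.Iio i) = A ∩ Finset.Iic i := by
      ext j
      simp only [Finset.mem_insert, Finset.mem_inter, Finset.mem_Iio, Finset.mem_Iic]
      constructor
      · rintro (rfl | ⟨hj, hlt⟩)
        · exact ⟨hi, le_refl _⟩
        · exact ⟨hj, le_of_lt hlt⟩
      · rintro ⟨hj, hle⟩
        rcases eq_or_lt_of_le hle with heq | hlt
        · exact Or.inl heq
        · exact Or.inr ⟨hj, hlt⟩
    rw [h1, h2] at hkey
    have : d i = ShearerAux.F μ (Finset.Iic i) - ShearerAux.F μ (Finset.Iio i) := rfl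
    rw [this]
    linarith
  have hsum : (k:ℝ) * ShearerAux.F μ Finset.univ ≤ ∑ A ∈ 𝒜, ShearerAux.F μ A := by
    calc (k:ℝ) * ShearerAux.F μ Finset.univ = ∑ i, (k:ℝ) * d i := by
          rw [hduniv, Finset.mul_sum]
      _ ≤ ∑ i, ((𝒜.filter (fun A => i ∈ A)).card : ℝ) * d i := by
          refine Finset.sum_le_sum fun i _ => mul_le_mul_of_nonneg_right ?_ (hd0 i)
          exact_mod_cast hcover i
      _ = ∑ i, ∑ A ∈ 𝒜, (if i ∈ A then d i else 0) := by
          refine Finset.sum_congr rfl fun i _ => ?_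
          rw [Finset.sum_ite, Finset.sum_const, Finset.sum_const_zero, add_zero, nsmul_eq_mul]
      _ = ∑ A ∈ 𝒜, ∑ i, (if i ∈ A then d i else 0) := Finset.sum_comm
      _ = ∑ A ∈ 𝒜, ∑ i ∈ A, d i := by
          refine Finset.sum_congr rfl fun A _ => ?_
          rw [Finset.sum_ite_mem, Finset.univ_inter]
      _ ≤ ∑ A ∈ 𝒜, ShearerAux.F μ A := Finset.sum_le_sum fun A _ => hFA A
  have hbridge : ∑ A ∈ 𝒜, shannonEntropy (marginal μ A) = ∑ A ∈ 𝒜, ShearerAux.F μ A :=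
    Finset.sum_congr rfl fun A _ => ShearerAux.bridge
  have hk' : (0:ℝ) < k := Nat.cast_pos.2 hk
  rw [hFuniv, hbridge, one_div]
  calc ShearerAux.F μ Finset.univ = (k:ℝ)⁻¹ * ((k:ℝ) * ShearerAux.F μ Finset.univ) := by
        field_simp
    _ ≤ (k:ℝ)⁻¹ * ∑ A ∈ 𝒜, ShearerAux.F μ A :=
        mul_le_mul_of_nonneg_left hsum (by positivity)
end

section
/- For 0 ≤ t ≤ r ≤ n, one has (1 / C(n, r)) · log₂(m_{n,r} + 1) ≤ (1 / C(n−t, r−t)) · log₂(m_{n−t, r−t} + 1), where m_{n,r} is the number of matroids of rank r on ground set [n]. -/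
open scoped Classical

/-- The base exchange axiom for a collection of finite subsets. -/
def ExchangeAxiom {α : Type*} (ℬ : Finset (Finset α)) : Prop :=
  ∀ B ∈ ℬ, ∀ B' ∈ ℬ, ∀ e ∈ B \ B', ∃ f ∈ B' \ B, (B.erase e) ∪ {f} ∈ ℬ

/-- `matroidCount n r` is the number of rank-`r` matroids on `[n]`, i.e. the number of
nonempty collections of `r`-element subsets of `Fin n` satisfying the exchange axiom. -/
noncomputable def matroidCount (n r : ℕ) : ℕ :=
  (Finset.univ.filter (fun ℬ : Finset (Finset (Fin n)) =>
    ℬ.Nonempty ∧ (∀ B ∈ ℬ, B.card = r) ∧ ExchangeAxiom ℬ)).card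

namespace ShearerAux


variable {α : Type*}

/-- The number of elements of `F` in the same fiber of `f` as `x`. -/
noncomputable def cnt {β : Type*} (F : Finset α) (f : α → β) (x : α) : ℕ :=
  (F.filter fun y => f y = f x).card

lemma cnt_pos {β : Type*} (F : Finset α) (f : α → β) {x : α} (hx : x ∈ F) :
    0 < cnt F f x :=
  Finset.card_pos.2 ⟨x, Finset.mem_filter.2 ⟨hx, rfl⟩⟩

lemma cnt_congr {β γ : Type*} (F : Finset α) (f : α → β) (g : α → γ) (x : α)
    (h : ∀ y, f y = f x ↔ g y = g x) : cnt F f x = cnt F g x := by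
  unfold cnt
  congr 1
  exact Finset.filter_congr fun y _ => h y

lemma cnt_mono {β γ : Type*} (F : Finset α) (f : α → β) (g : α → γ) (x : α)
    (h : ∀ y ∈ F, f y = f x → g y = g x) : cnt F f x ≤ cnt F g x := by
  apply Finset.card_le_card
  intro y hy
  rw [Finset.mem_filter] at hy ⊢
  exact ⟨hy.1, h y hy.1 hy.2⟩

lemma sum_inv_cnt {β : Type*} (F : Finset α) (f : α → β) :
    ∑ x ∈ F, ((cnt F f x : ℝ))⁻¹ = ((F.image f).card : ℝ) := by
  rw [← Finset.sum_fiberwise_of_maps_to (fun x hx => Finset.mem_image_of_mem f hx)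
    (fun x => ((cnt F f x : ℝ))⁻¹)]
  rw [Finset.card_eq_sum_ones (F.image f)]
  push_cast
  refine Finset.sum_congr rfl fun v hv => ?_
  obtain ⟨x0, hx0, hfx0⟩ := Finset.mem_image.1 hv
  have hcnt : ∀ x ∈ F.filter fun x => f x = v, cnt F f x = (F.filter fun y => f y = v).card := by
    intro x hx
    rw [Finset.mem_filter] at hx
    unfold cnt
    congr 1
    exact Finset.filter_congr fun y _ => by rw [hx.2]
  have hpos : 0 < (F.filter fun y => f y = v).card :=
    Finset.card_pos.2 ⟨x0, Finset.mem_filter.2 ⟨hx0, hfx0⟩⟩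
  rw [Finset.sum_congr rfl fun x hx => by rw [hcnt x hx]]
  rw [Finset.sum_const, nsmul_eq_mul]
  field_simp

/-- Sum over `F` of logs of fiber sizes. -/
noncomputable def SL {β : Type*} (F : Finset α) (f : α → β) : ℝ :=
  ∑ x ∈ F, Real.log (cnt F f x)

lemma SL_le_SL {β γ : Type*} (F : Finset α) (f : α → β) (g : α → γ)
    (h : ∀ x ∈ F, ∀ y ∈ F, f y = f x → g y = g x) : SL F f ≤ SL F g := by
  refine Finset.sum_le_sum fun x hx => ?_
  have h1 : 0 < cnt F f x := cnt_pos F f hx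
  have h2 : cnt F f x ≤ cnt F g x := cnt_mono F f g x (fun y hy => h x hx y hy)
  exact Real.log_le_log (by exact_mod_cast h1) (by exact_mod_cast h2)

lemma SL_congr {β γ : Type*} (F : Finset α) (f : α → β) (g : α → γ)
    (h : ∀ x, ∀ y, f y = f x ↔ g y = g x) : SL F f = SL F g := by
  refine Finset.sum_congr rfl fun x _ => ?_
  rw [cnt_congr F f g x (h x)]

/-- Maximum-entropy bound: `N log N - SL f ≤ N log |image f|`. -/
lemma maxent {β : Type*} (F : Finset α) (f : α → β) (hF : F.Nonempty) :
    (F.card : ℝ) * Real.log F.card - SL F f ≤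
      (F.card : ℝ) * Real.log ((F.image f).card) := by
  set N : ℝ := (F.card : ℝ) with hN
  set K : ℝ := ((F.image f).card : ℝ) with hK
  have hNpos : 0 < N := by rw [hN]; exact_mod_cast hF.card_pos
  have hKpos : 0 < K := by
    have : (F.image f).Nonempty := hF.image f
    rw [hK]; exact_mod_cast this.card_pos
  have key : ∀ x ∈ F, Real.log N - Real.log (cnt F f x) - Real.log K
      ≤ N * ((cnt F f x : ℝ))⁻¹ / K - 1 := by
    intro x hx
    have hc : (0 : ℝ) < (cnt F f x : ℝ) := by exact_mod_cast cnt_pos F f hx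
    have hq : (0 : ℝ) < N / ((cnt F f x : ℝ) * K) := by positivity
    have hlog := Real.log_le_sub_one_of_pos hq
    rw [Real.log_div (by positivity) (by positivity), Real.log_mul (by positivity) (by positivity)]
      at hlog
    calc Real.log N - Real.log (cnt F f x) - Real.log K
        = Real.log N - (Real.log (cnt F f x) + Real.log K) := by ring
      _ ≤ N / ((cnt F f x : ℝ) * K) - 1 := hlog
      _ = N * ((cnt F f x : ℝ))⁻¹ / K - 1 := by
          field_simp
  have hsum := Finset.sum_le_sum key
  have hL : ∑ x ∈ F, (Real.log N - Real.log (cnt F f x) - Real.log K)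
      = N * Real.log N - SL F f - N * Real.log K := by
    rw [Finset.sum_sub_distrib, Finset.sum_sub_distrib, Finset.sum_const, Finset.sum_const]
    simp only [nsmul_eq_mul, SL, hN]
  have hR : ∑ x ∈ F, (N * ((cnt F f x : ℝ))⁻¹ / K - 1) = 0 := by
    rw [Finset.sum_sub_distrib, Finset.sum_const]
    rw [show (fun x => N * ((cnt F f x : ℝ))⁻¹ / K) = fun x => (N / K) * ((cnt F f x : ℝ))⁻¹ by
      funext x; ring]
    rw [← Finset.mul_sum, sum_inv_cnt]
    field_simp
    rw [nsmul_eq_mul, mul_one, hN, hK]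
    ring
  rw [hL, hR] at hsum
  linarith

/-- Key counting estimate for the entropy-drop lemma. -/
lemma sum_ratio_le {β γ δ : Type*} (F : Finset α) (u : α → β) (h : α → γ) (g : α → δ)
    (σf : γ → δ) (hfac : ∀ x, g x = σf (h x)) :
    ∑ x ∈ F, ((cnt F h x : ℝ) * (cnt F (fun y => (u y, g y)) x : ℝ)) /
        ((cnt F (fun y => (u y, h y)) x : ℝ) * (cnt F g x : ℝ)) ≤ (F.card : ℝ) := by
  set uh : α → β × γ := fun y => (u y, h y) with huh_def
  set ug : α → β × δ := fun y => (u y, g y) with hug_def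
  set φ : β × γ → β × δ := fun p => (p.1, σf p.2) with hφ_def
  have hφuh : ∀ x, ug x = φ (uh x) := fun x => by
    simp only [huh_def, hug_def, hφ_def, ← hfac x]
  -- group by fibers of uh
  rw [← Finset.sum_fiberwise_of_maps_to (fun x hx => Finset.mem_image_of_mem uh hx)
    (fun x => ((cnt F h x : ℝ) * (cnt F ug x : ℝ)) / ((cnt F uh x : ℝ) * (cnt F g x : ℝ)))]
  -- the summand is constant on each uh-fiber
  have hconst : ∀ p ∈ F.image uh,
      ∑ x ∈ F.filter fun x => uh x = p,
        ((cnt F h x : ℝ) * (cnt F ug x : ℝ)) / ((cnt F uh x : ℝ) * (cnt F g x : ℝ))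
      = ((F.filter fun y => h y = p.2).card * ((F.filter fun y => ug y = φ p).card : ℝ)) /
          ((F.filter fun y => g y = σf p.2).card : ℝ) := by
    intro p hp
    obtain ⟨x0, hx0F, hx0⟩ := Finset.mem_image.1 hp
    have hfibcard : 0 < (F.filter fun x => uh x = p).card :=
      Finset.card_pos.2 ⟨x0, Finset.mem_filter.2 ⟨hx0F, hx0⟩⟩
    have hsummand : ∀ x ∈ F.filter fun x => uh x = p,
        ((cnt F h x : ℝ) * (cnt F ug x : ℝ)) / ((cnt F uh x : ℝ) * (cnt F g x : ℝ))
        = ((F.filter fun y => h y = p.2).card * ((F.filter fun y => ug y = φ p).card : ℝ)) /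
            (((F.filter fun x => uh x = p).card : ℝ) *
              ((F.filter fun y => g y = σf p.2).card : ℝ)) := by
      intro x hx
      obtain ⟨hxF, hxp⟩ := Finset.mem_filter.1 hx
      have hh : h x = p.2 := by rw [← hxp]
      have hgg : g x = σf p.2 := by rw [hfac x, hh]
      have hug2 : ug x = φ p := by rw [hφuh x, hxp]
      have e1 : cnt F h x = (F.filter fun y => h y = p.2).card := by
        unfold cnt; rw [hh]; all_goals exact congrArg Finset.card (Finset.filter_congr_decidable _ _ _)
      have e2 : cnt F ug x = (F.filter fun y => ug y = φ p).card := by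
        unfold cnt; rw [hug2]; all_goals exact congrArg Finset.card (Finset.filter_congr_decidable _ _ _)
      have e3 : cnt F uh x = (F.filter fun x => uh x = p).card := by
        unfold cnt; rw [hxp]; all_goals exact congrArg Finset.card (Finset.filter_congr_decidable _ _ _)
      have e4 : cnt F g x = (F.filter fun y => g y = σf p.2).card := by
        unfold cnt; rw [hgg]; all_goals exact congrArg Finset.card (Finset.filter_congr_decidable _ _ _)
      rw [e1, e2, e3, e4]
    rw [Finset.sum_congr rfl hsummand, Finset.sum_const, nsmul_eq_mul]
    have hne : ((F.filter fun x => uh x = p).card : ℝ) ≠ 0 := by positivity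
    have hG : ((F.filter fun y => g y = σf p.2).card : ℝ) ≠ 0 := by
      have : x0 ∈ F.filter fun y => g y = σf p.2 := by
        refine Finset.mem_filter.2 ⟨hx0F, ?_⟩
        rw [hfac x0, show h x0 = p.2 from by rw [← hx0]]
      have hpos : 0 < (F.filter fun y => g y = σf p.2).card := Finset.card_pos.2 ⟨x0, this⟩
      positivity
    field_simp
  rw [Finset.sum_congr rfl hconst]
  -- group the uh-fibers by their φ-image
  rw [← Finset.sum_fiberwise_of_maps_to (g := φ) (t := F.image ug)
    (fun p hp => by
      obtain ⟨x, hxF, hx⟩ := Finset.mem_image.1 hp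
      exact Finset.mem_image.2 ⟨x, hxF, by rw [hφuh x, hx]⟩)
    (fun p => ((F.filter fun y => h y = p.2).card * ((F.filter fun y => ug y = φ p).card : ℝ)) /
          ((F.filter fun y => g y = σf p.2).card : ℝ))]
  have hq : ∀ q ∈ F.image ug,
      ∑ p ∈ (F.image uh).filter fun p => φ p = q,
        ((F.filter fun y => h y = p.2).card * ((F.filter fun y => ug y = φ p).card : ℝ)) /
          ((F.filter fun y => g y = σf p.2).card : ℝ)
      ≤ ((F.filter fun y => ug y = q).card : ℝ) := by
    intro q hq
    obtain ⟨x1, hx1F, hx1⟩ := Finset.mem_image.1 hq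
    have hgq : 0 < (F.filter fun y => g y = q.2).card := by
      refine Finset.card_pos.2 ⟨x1, Finset.mem_filter.2 ⟨hx1F, ?_⟩⟩
      rw [show g x1 = (ug x1).2 from rfl, hx1]
    have hsummand : ∀ p ∈ (F.image uh).filter fun p => φ p = q,
        ((F.filter fun y => h y = p.2).card * ((F.filter fun y => ug y = φ p).card : ℝ)) /
          ((F.filter fun y => g y = σf p.2).card : ℝ)
        = (((F.filter fun y => ug y = q).card : ℝ) / ((F.filter fun y => g y = q.2).card : ℝ)) *
            ((F.filter fun y => h y = p.2).card : ℝ) := by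
      intro p hp
      obtain ⟨hpim, hpq⟩ := Finset.mem_filter.1 hp
      have h2 : σf p.2 = q.2 := by rw [← hpq]
      rw [hpq, h2]
      ring
    rw [Finset.sum_congr rfl hsummand, ← Finset.mul_sum]
    -- bound the sum of h-fiber sizes by the g-fiber size
    have hdisj : ∀ p ∈ (F.image uh).filter fun p => φ p = q,
        ∀ p' ∈ (F.image uh).filter fun p => φ p = q, p ≠ p' →
        Disjoint (F.filter fun y => h y = p.2) (F.filter fun y => h y = p'.2) := by
      intro p hp p' hp' hne
      obtain ⟨hpim, hpq⟩ := Finset.mem_filter.1 hp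
      obtain ⟨hpim', hpq'⟩ := Finset.mem_filter.1 hp'
      have h1 : p.1 = p'.1 := by
        have : (φ p).1 = (φ p').1 := by rw [hpq, hpq']
        exact this
      have h2 : p.2 ≠ p'.2 := by
        intro hcontra
        exact hne (Prod.ext h1 hcontra)
      rw [Finset.disjoint_left]
      intro y hy hy'
      exact h2 ((Finset.mem_filter.1 hy).2 ▸ (Finset.mem_filter.1 hy').2 ▸ rfl)
    have hsub : ((F.image uh).filter fun p => φ p = q).biUnion
        (fun p => F.filter fun y => h y = p.2) ⊆ F.filter fun y => g y = q.2 := by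
      intro y hy
      obtain ⟨p, hp, hyp⟩ := Finset.mem_biUnion.1 hy
      obtain ⟨hpim, hpq⟩ := Finset.mem_filter.1 hp
      obtain ⟨hyF, hyh⟩ := Finset.mem_filter.1 hyp
      refine Finset.mem_filter.2 ⟨hyF, ?_⟩
      rw [hfac y, hyh, show σf p.2 = (φ p).2 from rfl, hpq]
    have hcardsum : ∑ p ∈ (F.image uh).filter fun p => φ p = q,
        (F.filter fun y => h y = p.2).card ≤ (F.filter fun y => g y = q.2).card := by
      rw [← Finset.card_biUnion hdisj]
      exact Finset.card_le_card hsub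
    have hcardsumR : ∑ p ∈ (F.image uh).filter fun p => φ p = q,
        ((F.filter fun y => h y = p.2).card : ℝ) ≤ ((F.filter fun y => g y = q.2).card : ℝ) := by
      push_cast at hcardsum ⊢
      exact_mod_cast hcardsum
    calc (((F.filter fun y => ug y = q).card : ℝ) / ((F.filter fun y => g y = q.2).card : ℝ)) *
            ∑ p ∈ (F.image uh).filter fun p => φ p = q, ((F.filter fun y => h y = p.2).card : ℝ)
        ≤ (((F.filter fun y => ug y = q).card : ℝ) / ((F.filter fun y => g y = q.2).card : ℝ)) *
            ((F.filter fun y => g y = q.2).card : ℝ) := by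
          apply mul_le_mul_of_nonneg_left hcardsumR (by positivity)
      _ = ((F.filter fun y => ug y = q).card : ℝ) := by
          field_simp
  calc ∑ q ∈ F.image ug, ∑ p ∈ (F.image uh).filter fun p => φ p = q,
        ((F.filter fun y => h y = p.2).card * ((F.filter fun y => ug y = φ p).card : ℝ)) /
          ((F.filter fun y => g y = σf p.2).card : ℝ)
      ≤ ∑ q ∈ F.image ug, ((F.filter fun y => ug y = q).card : ℝ) :=
        Finset.sum_le_sum hq
    _ = (F.card : ℝ) := by
        rw [← Nat.cast_sum]
        congr 1
        exact (Finset.card_eq_sum_card_fiberwise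
          (fun x hx => Finset.mem_image_of_mem ug hx)).symm


/-- Entropy-drop lemma: conditioning on finer information decreases conditional entropy. -/
lemma drop {β γ δ : Type*} (F : Finset α) (u : α → β) (h : α → γ) (g : α → δ)
    (σf : γ → δ) (hfac : ∀ x, g x = σf (h x)) :
    SL F h - SL F (fun y => (u y, h y)) ≤ SL F g - SL F (fun y => (u y, g y)) := by
  set uh : α → β × γ := fun y => (u y, h y) with huh_def
  set ug : α → β × δ := fun y => (u y, g y) with hug_def
  have key : ∀ x ∈ F,
      Real.log (cnt F h x) - Real.log (cnt F uh x)
        - (Real.log (cnt F g x) - Real.log (cnt F ug x))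
      ≤ ((cnt F h x : ℝ) * (cnt F ug x : ℝ)) / ((cnt F uh x : ℝ) * (cnt F g x : ℝ)) - 1 := by
    intro x hx
    have c1 : (0:ℝ) < (cnt F h x : ℝ) := by exact_mod_cast cnt_pos F h hx
    have c2 : (0:ℝ) < (cnt F uh x : ℝ) := by exact_mod_cast cnt_pos F uh hx
    have c3 : (0:ℝ) < (cnt F g x : ℝ) := by exact_mod_cast cnt_pos F g hx
    have c4 : (0:ℝ) < (cnt F ug x : ℝ) := by exact_mod_cast cnt_pos F ug hx
    have hq : (0:ℝ) < ((cnt F h x : ℝ) * (cnt F ug x : ℝ)) /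
        ((cnt F uh x : ℝ) * (cnt F g x : ℝ)) := by positivity
    have hlog := Real.log_le_sub_one_of_pos hq
    rw [Real.log_div (by positivity) (by positivity),
      Real.log_mul (by positivity) (by positivity),
      Real.log_mul (by positivity) (by positivity)] at hlog
    calc Real.log (cnt F h x) - Real.log (cnt F uh x)
          - (Real.log (cnt F g x) - Real.log (cnt F ug x))
        = Real.log (cnt F h x) + Real.log (cnt F ug x)
            - (Real.log (cnt F uh x) + Real.log (cnt F g x)) := by ring
      _ ≤ _ := hlog
  have hsum := Finset.sum_le_sum key
  have hratio := sum_ratio_le F u h g σf hfac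
  have hL : ∑ x ∈ F, (Real.log (cnt F h x) - Real.log (cnt F uh x)
      - (Real.log (cnt F g x) - Real.log (cnt F ug x)))
      = (SL F h - SL F uh) - (SL F g - SL F ug) := by
    simp only [SL]
    rw [← Finset.sum_sub_distrib, ← Finset.sum_sub_distrib, ← Finset.sum_sub_distrib]
  have hR : ∑ x ∈ F, (((cnt F h x : ℝ) * (cnt F ug x : ℝ)) /
      ((cnt F uh x : ℝ) * (cnt F g x : ℝ)) - 1) ≤ 0 := by
    rw [Finset.sum_sub_distrib, Finset.sum_const, nsmul_eq_mul, mul_one]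
    linarith
  rw [hL] at hsum
  linarith

theorem shearer {β γ ι κ : Type*} [Fintype ι] [Fintype κ]
    (F : Finset α) (f : ι → α → β)
    (hdet : ∀ x ∈ F, ∀ y ∈ F, (∀ i, f i x = f i y) → x = y)
    (Sf : κ → Finset ι) (k : ℕ)
    (hcov : ∀ i : ι, k ≤ (Finset.univ.filter fun s : κ => i ∈ Sf s).card)
    (g : κ → α → γ)
    (hg : ∀ s : κ, ∀ x ∈ F, ∀ y ∈ F, g s x = g s y → ∀ i ∈ Sf s, f i x = f i y) :
    (k : ℝ) * Real.log F.card ≤ ∑ s : κ, Real.log ((F.image (g s)).card) := by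
  rcases F.eq_empty_or_nonempty with rfl | hF
  · simp
  have hN : 0 < F.card := hF.card_pos
  have hNR : (0:ℝ) < (F.card : ℝ) := by exact_mod_cast hN
  set d := Fintype.card ι with hd_def
  rcases Nat.eq_zero_or_pos d with hd | hdpos
  · have hι : IsEmpty ι := Fintype.card_eq_zero_iff.1 hd
    obtain ⟨a, rfl⟩ : ∃ a, F = {a} := by
      rw [← Finset.card_eq_one]
      refine le_antisymm (Finset.card_le_one.2 fun x hx y hy => ?_) hN
      exact hdet x hx y hy fun i => hι.elim i
    simp
  set e : ι ≃ Fin d := Fintype.equivFin ι with he_def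
  set iOf : ℕ → ι := fun j => e.symm ⟨j % d, Nat.mod_lt _ hdpos⟩ with hiOf_def
  have hiOf : ∀ j, j < d → (e (iOf j) : ℕ) = j := by
    intro j hj
    simp [hiOf_def, Nat.mod_eq_of_lt hj]
  set pre : ℕ → Finset ι := fun j => Finset.univ.filter fun i => (e i : ℕ) < j with hpre_def
  set rst : Finset ι → α → (ι → Option β) :=
    fun S x i => if i ∈ S then some (f i x) else none with hrst_def
  have hmem_pre : ∀ i j, i ∈ pre j ↔ (e i : ℕ) < j := by
    intro i j; simp [hpre_def]
  have hidx : ∀ i j, j < d → ((e i : ℕ) = j ↔ i = iOf j) := by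
    intro i j hj
    constructor
    · intro hh; apply e.injective; apply Fin.ext; rw [hiOf j hj]; exact hh
    · rintro rfl; exact hiOf j hj
  have hkey : ∀ (S : Finset ι) j, j < d → iOf j ∈ S →
      S ∩ pre (j+1) = insert (iOf j) (S ∩ pre j) := by
    intro S j hj hiS
    ext i
    simp only [Finset.mem_inter, Finset.mem_insert, hmem_pre]
    constructor
    · rintro ⟨h1, h2⟩
      rcases Nat.lt_succ_iff_lt_or_eq.1 h2 with h2 | h2
      · exact Or.inr ⟨h1, h2⟩
      · exact Or.inl ((hidx i j hj).1 h2)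
    · rintro (rfl | ⟨h1, h2⟩)
      · exact ⟨hiS, by rw [hiOf j hj]; omega⟩
      · exact ⟨h1, by omega⟩
  have hkey2 : ∀ (S : Finset ι) j, j < d → iOf j ∉ S →
      S ∩ pre (j+1) = S ∩ pre j := by
    intro S j hj hiS
    ext i
    simp only [Finset.mem_inter, hmem_pre]
    constructor
    · rintro ⟨h1, h2⟩
      rcases Nat.lt_succ_iff_lt_or_eq.1 h2 with h2 | h2
      · exact ⟨h1, h2⟩
      · exact absurd ((hidx i j hj).1 h2 ▸ h1) hiS
    · rintro ⟨h1, h2⟩; exact ⟨h1, by omega⟩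
  have hpre0 : ∀ S : Finset ι, S ∩ pre 0 = ∅ := by
    intro S
    ext i
    simp [hmem_pre i 0]
  have hpred : ∀ S : Finset ι, S ∩ pre d = S := by
    intro S
    have : pre d = Finset.univ := by
      apply Finset.eq_univ_of_forall
      intro i
      rw [hmem_pre]
      exact (e i).isLt
    rw [this, Finset.inter_univ]
  have hins : ∀ (i : ι) (S : Finset ι) (x y : α),
      rst (insert i S) y = rst (insert i S) x ↔ (f i y, rst S y) = (f i x, rst S x) := by
    intro i S x y
    constructor
    · intro hEq
      have h1 : f i y = f i x := by
        have := congrFun hEq i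
        simpa [hrst_def] using this
      have h2 : rst S y = rst S x := by
        funext w
        by_cases hw : w ∈ S
        · have := congrFun hEq w
          simp only [hrst_def, Finset.mem_insert, hw, or_true, if_true] at this
          simp only [hrst_def, hw, if_true]
          exact this
        · simp [hrst_def, hw]
      rw [h1, h2]
    · intro hEq
      have h1 : f i y = f i x := congrArg Prod.fst hEq
      have h2 : rst S y = rst S x := congrArg Prod.snd hEq
      funext w
      by_cases hw : w = i
      · subst hw; simp [hrst_def, h1]
      · by_cases hwS : w ∈ S
        · have := congrFun h2 w
          simp only [hrst_def, hwS, if_true] at this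
          simp [hrst_def, Finset.mem_insert, hw, hwS, this]
        · simp [hrst_def, Finset.mem_insert, hw, hwS]
  have hSLins : ∀ (i : ι) (S : Finset ι),
      SL F (rst (insert i S)) = SL F (fun y => (f i y, rst S y)) :=
    fun i S => SL_congr F _ _ (fun x y => hins i S x y)
  have hrst_mono : ∀ (S S' : Finset ι), S ⊆ S' → ∀ x y,
      rst S' y = rst S' x → rst S y = rst S x := by
    intro S S' hSS x y hEq
    funext w
    by_cases hw : w ∈ S
    · have hw' : w ∈ S' := hSS hw
      have := congrFun hEq w
      simp only [hrst_def, hw', if_true] at this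
      simp only [hrst_def, hw, if_true]
      exact this
    · simp [hrst_def, hw]
  have hSL_empty : SL F (rst ∅) = (F.card : ℝ) * Real.log F.card := by
    unfold SL
    have hc : ∀ x ∈ F, cnt F (rst ∅) x = F.card := by
      intro x hx
      unfold cnt
      rw [Finset.filter_congr_decidable]
      apply le_antisymm (Finset.card_le_card (Finset.filter_subset _ _))
      apply Finset.card_le_card
      intro y hy
      exact Finset.mem_filter.2 ⟨hy, by funext w; simp [hrst_def]⟩
    rw [Finset.sum_congr rfl (fun x hx => by rw [hc x hx])]
    rw [Finset.sum_const, nsmul_eq_mul]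
  have hSL_univ : SL F (rst Finset.univ) = 0 := by
    unfold SL
    rw [Finset.sum_eq_zero]
    intro x hx
    have hone : cnt F (rst Finset.univ) x = 1 := by
      unfold cnt
      rw [Finset.filter_congr_decidable]
      rw [Finset.card_eq_one]
      refine ⟨x, ?_⟩
      ext y
      simp only [Finset.mem_filter, Finset.mem_singleton]
      constructor
      · rintro ⟨hyF, hEq⟩
        refine hdet y hyF x hx fun i => ?_
        have := congrFun hEq i
        simpa [hrst_def] using this
      · rintro rfl; exact ⟨hx, rfl⟩
    rw [hone]
    simp
  have hstep_all : ∀ (S : Finset ι) j, j < d →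
      (if iOf j ∈ S then SL F (rst (pre j)) - SL F (rst (pre (j+1))) else 0)
        ≤ SL F (rst (S ∩ pre j)) - SL F (rst (S ∩ pre (j+1))) := by
    intro S j hj
    by_cases hiS : iOf j ∈ S
    · rw [if_pos hiS, hkey S j hj hiS]
      have hu1 : pre (j+1) = insert (iOf j) (pre j) := by
        have h' := hkey Finset.univ j hj (Finset.mem_univ _)
        rwa [Finset.univ_inter, Finset.univ_inter] at h'
      have hdrop := drop F (f (iOf j)) (rst (pre j)) (rst (S ∩ pre j))
          (fun v w => if w ∈ S then v w else none)
          (by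
            intro x
            funext w
            by_cases h1 : w ∈ S <;> by_cases h2 : w ∈ pre j <;>
              simp [hrst_def, Finset.mem_inter, h1, h2])
      rw [← hSLins (iOf j) (pre j), ← hSLins (iOf j) (S ∩ pre j), ← hu1] at hdrop
      exact hdrop
    · rw [if_neg hiS, hkey2 S j hj hiS, sub_self]
  have hstep_nonneg : ∀ j, 0 ≤ SL F (rst (pre j)) - SL F (rst (pre (j+1))) := by
    intro j
    have hsub : pre j ⊆ pre (j+1) := by
      intro i hi
      rw [hmem_pre] at hi ⊢
      omega
    have := SL_le_SL F (rst (pre (j+1))) (rst (pre j))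
      (fun x _ y _ hEq => hrst_mono _ _ hsub x y hEq)
    linarith
  have hs : ∀ s : κ, ∑ j ∈ Finset.range d,
      (if iOf j ∈ Sf s then SL F (rst (pre j)) - SL F (rst (pre (j+1))) else 0)
      ≤ (F.card : ℝ) * Real.log ((F.image (g s)).card) := by
    intro s
    have h1 : ∑ j ∈ Finset.range d,
        (if iOf j ∈ Sf s then SL F (rst (pre j)) - SL F (rst (pre (j+1))) else 0)
        ≤ ∑ j ∈ Finset.range d,
          (SL F (rst (Sf s ∩ pre j)) - SL F (rst (Sf s ∩ pre (j+1)))) :=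
      Finset.sum_le_sum fun j hj => hstep_all (Sf s) j (Finset.mem_range.1 hj)
    rw [Finset.sum_range_sub' (fun j => SL F (rst (Sf s ∩ pre j))) d] at h1
    rw [hpre0 (Sf s), hpred (Sf s)] at h1
    have h2 : SL F (g s) ≤ SL F (rst (Sf s)) := by
      refine SL_le_SL F (g s) (rst (Sf s)) fun x hx y hy hEq => ?_
      funext w
      by_cases hw : w ∈ Sf s
      · simp only [hrst_def, hw, if_true]
        rw [hg s y hy x hx hEq w hw]
      · simp [hrst_def, hw]
    have h3 := maxent F (g s) hF
    linarith [hSL_empty]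
  have htot : (k : ℝ) * ((F.card : ℝ) * Real.log F.card)
      ≤ ∑ s : κ, ∑ j ∈ Finset.range d,
        (if iOf j ∈ Sf s then SL F (rst (pre j)) - SL F (rst (pre (j+1))) else 0) := by
    rw [Finset.sum_comm]
    have hj : ∀ j ∈ Finset.range d,
        (k : ℝ) * (SL F (rst (pre j)) - SL F (rst (pre (j+1))))
        ≤ ∑ s : κ, (if iOf j ∈ Sf s then SL F (rst (pre j)) - SL F (rst (pre (j+1))) else 0) := by
      intro j _
      rw [← Finset.sum_filter]
      rw [Finset.sum_const, nsmul_eq_mul]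
      have hc := hcov (iOf j)
      have hcR : (k : ℝ) ≤ ((Finset.univ.filter fun s : κ => iOf j ∈ Sf s).card : ℝ) := by
        exact_mod_cast hc
      exact mul_le_mul_of_nonneg_right hcR (hstep_nonneg j)
    calc (k : ℝ) * ((F.card : ℝ) * Real.log F.card)
        = (k : ℝ) * ∑ j ∈ Finset.range d,
            (SL F (rst (pre j)) - SL F (rst (pre (j+1)))) := by
          rw [Finset.sum_range_sub' (fun j => SL F (rst (pre j))) d]
          have e0 : pre 0 = ∅ := by rw [← Finset.univ_inter (pre 0)]; exact hpre0 _
          have ed : pre d = Finset.univ := by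
            rw [← Finset.univ_inter (pre d)]; exact hpred _
          rw [e0, ed, hSL_empty, hSL_univ, sub_zero]
      _ = ∑ j ∈ Finset.range d, (k : ℝ) *
            (SL F (rst (pre j)) - SL F (rst (pre (j+1)))) := by
          rw [Finset.mul_sum]
      _ ≤ _ := Finset.sum_le_sum hj
  have hfinal : (k : ℝ) * ((F.card : ℝ) * Real.log F.card)
      ≤ (F.card : ℝ) * ∑ s : κ, Real.log ((F.image (g s)).card) := by
    calc (k : ℝ) * ((F.card : ℝ) * Real.log F.card)
        ≤ ∑ s : κ, ∑ j ∈ Finset.range d,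
          (if iOf j ∈ Sf s then SL F (rst (pre j)) - SL F (rst (pre (j+1))) else 0) := htot
      _ ≤ ∑ s : κ, (F.card : ℝ) * Real.log ((F.image (g s)).card) :=
          Finset.sum_le_sum fun s _ => hs s
      _ = (F.card : ℝ) * ∑ s : κ, Real.log ((F.image (g s)).card) := by
          rw [Finset.mul_sum]
  have := (mul_le_mul_iff_right₀ hNR).1 (by linarith [hfinal] :
    (F.card : ℝ) * ((k : ℝ) * Real.log F.card)
      ≤ (F.card : ℝ) * ∑ s : κ, Real.log ((F.image (g s)).card))
  exact this



/-- Contraction of a collection by a set `T`. -/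
noncomputable def contr {μ : Type*} (T : Finset μ) (ℬ : Finset (Finset μ)) :
    Finset (Finset μ) :=
  (ℬ.filter fun B => T ⊆ B).image fun B => B \ T

lemma mem_contr_iff {μ : Type*} (T : Finset μ) (ℬ : Finset (Finset μ)) (A : Finset μ)
    (hTA : T ⊆ A) : A ∈ ℬ ↔ A \ T ∈ contr T ℬ := by
  constructor
  · intro hA
    exact Finset.mem_image.2 ⟨A, Finset.mem_filter.2 ⟨hA, hTA⟩, rfl⟩
  · intro hA
    obtain ⟨B, hB, hBA⟩ := Finset.mem_image.1 hA
    obtain ⟨hBℬ, hTB⟩ := Finset.mem_filter.1 hB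
    have hBeq : B = A := by
      have h1 := Finset.sdiff_union_of_subset hTB
      have h2 := Finset.sdiff_union_of_subset hTA
      rw [← h1, hBA, h2]
    rwa [← hBeq]

lemma contr_exchange {μ : Type*} (T : Finset μ) (ℬ : Finset (Finset μ))
    (hE : ExchangeAxiom ℬ) : ExchangeAxiom (contr T ℬ) := by
  intro C hC C' hC' e he
  obtain ⟨B, hB, rfl⟩ := Finset.mem_image.1 hC
  obtain ⟨B', hB', rfl⟩ := Finset.mem_image.1 hC'
  obtain ⟨hBℬ, hTB⟩ := Finset.mem_filter.1 hB
  obtain ⟨hB'ℬ, hTB'⟩ := Finset.mem_filter.1 hB'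
  rw [Finset.mem_sdiff, Finset.mem_sdiff] at he
  obtain ⟨⟨heB, heT⟩, heBT'⟩ := he
  have heB' : e ∉ B' := fun hc => heBT' (Finset.mem_sdiff.2 ⟨hc, heT⟩)
  obtain ⟨ff, hffmem, hnew⟩ := hE B hBℬ B' hB'ℬ e (Finset.mem_sdiff.2 ⟨heB, heB'⟩)
  rw [Finset.mem_sdiff] at hffmem
  obtain ⟨hffB', hffB⟩ := hffmem
  have hffT : ff ∉ T := fun hc => hffB (hTB hc)
  refine ⟨ff, ?_, ?_⟩
  · rw [Finset.mem_sdiff, Finset.mem_sdiff, Finset.mem_sdiff]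
    exact ⟨⟨hffB', hffT⟩, fun hc => hffB hc.1⟩
  · have hset : (B.erase e ∪ {ff}) \ T = (B \ T).erase e ∪ {ff} := by
      ext a
      simp only [Finset.mem_sdiff, Finset.mem_union, Finset.mem_erase, Finset.mem_singleton]
      constructor
      · rintro ⟨h1 | rfl, haT⟩
        · exact Or.inl ⟨h1.1, h1.2, haT⟩
        · exact Or.inr rfl
      · rintro (⟨hane, haB, haT⟩ | rfl)
        · exact ⟨Or.inl ⟨hane, haB⟩, haT⟩
        · exact ⟨Or.inr rfl, hffT⟩
    rw [← hset]
    refine Finset.mem_image.2 ⟨B.erase e ∪ {ff}, Finset.mem_filter.2 ⟨hnew, ?_⟩, rfl⟩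
    intro a haT
    rcases eq_or_ne a e with rfl | hane
    · exact absurd haT heT
    · exact Finset.mem_union_left _ (Finset.mem_erase.2 ⟨hane, hTB haT⟩)

lemma image_exchange {μ ν : Type*} (π : μ → ν) (U : Finset μ)
    (hinj : Set.InjOn π ↑U) (𝒞 : Finset (Finset μ)) (hmem : ∀ C ∈ 𝒞, C ⊆ U)
    (hE : ExchangeAxiom 𝒞) : ExchangeAxiom (𝒞.image (Finset.image π)) := by
  intro C1 hC1 C2 hC2 b hb
  obtain ⟨B, hB, rfl⟩ := Finset.mem_image.1 hC1
  obtain ⟨B', hB', rfl⟩ := Finset.mem_image.1 hC2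
  rw [Finset.mem_sdiff] at hb
  obtain ⟨hbB, hbB'⟩ := hb
  obtain ⟨e, heB, rfl⟩ := Finset.mem_image.1 hbB
  have heB' : e ∉ B' := fun hc => hbB' (Finset.mem_image_of_mem π hc)
  obtain ⟨ff, hffmem, hnew⟩ := hE B hB B' hB' e (Finset.mem_sdiff.2 ⟨heB, heB'⟩)
  rw [Finset.mem_sdiff] at hffmem
  obtain ⟨hffB', hffB⟩ := hffmem
  refine ⟨π ff, ?_, ?_⟩
  · rw [Finset.mem_sdiff]
    refine ⟨Finset.mem_image_of_mem π hffB', fun hc => ?_⟩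
    obtain ⟨w, hw, hwf⟩ := Finset.mem_image.1 hc
    have hwff : w = ff := hinj (hmem B hB hw) (hmem B' hB' hffB') hwf
    exact hffB (hwff ▸ hw)
  · have himg : ((B.image π).erase (π e)) ∪ {π ff} = (B.erase e ∪ {ff}).image π := by
      ext c
      simp only [Finset.mem_union, Finset.mem_erase, Finset.mem_singleton, Finset.mem_image]
      constructor
      · rintro (⟨hbne, w, hw, rfl⟩ | rfl)
        · refine ⟨w, Or.inl ⟨fun hc => ?_, hw⟩, rfl⟩
          subst hc
          exact hbne rfl
        · exact ⟨ff, Or.inr rfl, rfl⟩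
      · rintro ⟨w, hw | rfl, rfl⟩
        · refine Or.inl ⟨fun hc => hw.1 (hinj (hmem B hB hw.2) (hmem B hB heB) hc), w, hw.2, rfl⟩
        · exact Or.inr rfl
    rw [himg]
    exact Finset.mem_image_of_mem _ hnew

lemma image_subset_of_subset {μ ν : Type*} (π : μ → ν) (U : Finset μ)
    (hinj : Set.InjOn π ↑U) (B C : Finset μ) (hBU : B ⊆ U) (hCU : C ⊆ U)
    (h : B.image π ⊆ C.image π) : B ⊆ C := by
  intro a ha
  have : π a ∈ C.image π := h (Finset.mem_image_of_mem π ha)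
  obtain ⟨w, hw, hwa⟩ := Finset.mem_image.1 this
  rwa [← hinj (hCU hw) (hBU ha) hwa]

lemma image_image_subset {μ ν : Type*} (π : μ → ν) (U : Finset μ)
    (hinj : Set.InjOn π ↑U) (𝒞₁ 𝒞₂ : Finset (Finset μ))
    (h1 : ∀ C ∈ 𝒞₁, C ⊆ U) (h2 : ∀ C ∈ 𝒞₂, C ⊆ U)
    (hEq : 𝒞₁.image (Finset.image π) ⊆ 𝒞₂.image (Finset.image π)) : 𝒞₁ ⊆ 𝒞₂ := by
  intro C hC
  have : C.image π ∈ 𝒞₂.image (Finset.image π) := hEq (Finset.mem_image_of_mem _ hC)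
  obtain ⟨C', hC', hCC⟩ := Finset.mem_image.1 this
  have : C' = C := by
    apply Finset.Subset.antisymm
    · exact image_subset_of_subset π U hinj C' C (h2 C' hC') (h1 C hC) (le_of_eq hCC)
    · exact image_subset_of_subset π U hinj C C' (h1 C hC) (h2 C' hC') (le_of_eq hCC.symm)
  rwa [← this]

lemma image_image_inj {μ ν : Type*} (π : μ → ν) (U : Finset μ)
    (hinj : Set.InjOn π ↑U) (𝒞₁ 𝒞₂ : Finset (Finset μ))
    (h1 : ∀ C ∈ 𝒞₁, C ⊆ U) (h2 : ∀ C ∈ 𝒞₂, C ⊆ U)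
    (hEq : 𝒞₁.image (Finset.image π) = 𝒞₂.image (Finset.image π)) : 𝒞₁ = 𝒞₂ :=
  Finset.Subset.antisymm
    (image_image_subset π U hinj 𝒞₁ 𝒞₂ h1 h2 (le_of_eq hEq))
    (image_image_subset π U hinj 𝒞₂ 𝒞₁ h2 h1 (le_of_eq hEq.symm))



lemma mem_image' {a b : Type*} (i : DecidableEq b) {s : Finset a} {f : a → b} {y : b} :
    y ∈ @Finset.image a b i f s ↔ ∃ x ∈ s, f x = y := by
  letI := i
  exact Finset.mem_image

lemma mem_filter' {a : Type*} {p : a → Prop} (i : DecidablePred p) {s : Finset a} {x : a} :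
    x ∈ @Finset.filter a p i s ↔ x ∈ s ∧ p x := by
  letI := i
  exact Finset.mem_filter

lemma mem_sdiff' {a : Type*} (i : DecidableEq a) {s t : Finset a} {x : a} :
    x ∈ @SDiff.sdiff _ (@Finset.instSDiff a i) s t ↔ x ∈ s ∧ x ∉ t := by
  letI := i
  exact Finset.mem_sdiff

lemma card_sdiff' {a : Type*} (i : DecidableEq a) {s t : Finset a} (h : s ⊆ t) :
    (@SDiff.sdiff _ (@Finset.instSDiff a i) t s).card = t.card - s.card := by
  letI := i
  exact Finset.card_sdiff_of_subset h

lemma card_image_of_injOn' {a b : Type*} (i : DecidableEq b) {s : Finset a} {f : a → b}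
    (h : Set.InjOn f ↑s) : (@Finset.image a b i f s).card = s.card := by
  letI := i
  exact Finset.card_image_of_injOn h

lemma image_nonempty' {a b : Type*} (i : DecidableEq b) {s : Finset a} (f : a → b)
    (h : s.Nonempty) : (@Finset.image a b i f s).Nonempty := by
  letI := i
  exact h.image f

lemma image_empty' {a b : Type*} (i : DecidableEq b) (f : a → b) :
    @Finset.image a b i f ∅ = ∅ := by
  letI := i
  exact Finset.image_empty f

lemma mem_image_of_mem' {a b : Type*} (i : DecidableEq b) {s : Finset a} (f : a → b) {x : a}
    (h : x ∈ s) : f x ∈ @Finset.image a b i f s := by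
  letI := i
  exact Finset.mem_image_of_mem f h

lemma image_inst_irrel {a b : Type*} (i1 i2 : DecidableEq b) (f : a → b) (s : Finset a) :
    @Finset.image a b i1 f s = @Finset.image a b i2 f s := by
  have : i1 = i2 := by funext x y; exact Subsingleton.elim _ _
  rw [this]

lemma image_fun_inst_irrel {a b : Type*} (i1 i2 : DecidableEq b) (f : a → b) :
    @Finset.image a b i1 f = @Finset.image a b i2 f := by
  have : i1 = i2 := by funext x y; exact Subsingleton.elim _ _
  rw [this]

lemma log_card_image_le {a b : Type*} (i : DecidableEq b) (F : Finset a) (gf : a → b)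
    (M : Finset b) (hF : F.Nonempty) (hmaps : ∀ x ∈ F, gf x ∈ M) :
    Real.log (((@Finset.image a b i gf F).card : ℝ)) ≤ Real.log ((M.card : ℝ)) := by
  have h1 : 0 < (@Finset.image a b i gf F).card := Finset.card_pos.2 (hF.image _)
  have h2 : (@Finset.image a b i gf F).card ≤ M.card := by
    refine Finset.card_le_card ?_
    intro y hy
    obtain ⟨x, hx, rfl⟩ := Finset.mem_image.1 hy
    exact hmaps x hx
  exact Real.log_le_log (by exact_mod_cast h1) (by exact_mod_cast h2)

noncomputable def MF (n r : ℕ) : Finset (Finset (Finset (Fin n))) :=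
  Finset.univ.filter (fun ℬ : Finset (Finset (Fin n)) =>
    ℬ.Nonempty ∧ (∀ B ∈ ℬ, B.card = r) ∧ ExchangeAxiom ℬ)

lemma matroidCount_eq (n r : ℕ) : matroidCount n r = (MF n r).card := rfl

lemma empty_not_mem_MF (n r : ℕ) : ∅ ∉ MF n r := by
  intro h
  exact Finset.not_nonempty_empty ((Finset.mem_filter.1 h).2.1)

lemma compl_card_fin {n t : ℕ} (T : Finset (Fin n)) (hT : T.card = t) :
    Tᶜ.card = n - t := by
  rw [Finset.card_compl, hT, Fintype.card_fin]

lemma main_count (n r t : ℕ) (htr : t < r) (hrn : r ≤ n) :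
    (r.choose t : ℝ) * Real.log ((matroidCount n r : ℝ) + 1)
      ≤ (n.choose t : ℝ) * Real.log ((matroidCount (n - t) (r - t) : ℝ) + 1) := by
  have hnt : 0 < n - t := by omega
  set F : Finset (Finset (Finset (Fin n))) := insert ∅ (MF n r) with hF_def
  have hFcard : F.card = matroidCount n r + 1 := by
    rw [hF_def, Finset.card_insert_of_notMem (empty_not_mem_MF n r), matroidCount_eq]
  have hFne : F.Nonempty := ⟨∅, Finset.mem_insert_self _ _⟩
  set f : {A : Finset (Fin n) // A.card = r} → Finset (Finset (Fin n)) → Prop :=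
    fun A ℬ => A.1 ∈ ℬ with hf_def
  set Sf : {T : Finset (Fin n) // T.card = t} → Finset {A : Finset (Fin n) // A.card = r} :=
    fun T => Finset.univ.filter fun A => T.1 ⊆ A.1 with hSf_def
  set eqv : (T : {T : Finset (Fin n) // T.card = t}) → {x // x ∈ (T.1)ᶜ} ≃ Fin (n - t) :=
    fun T => Fintype.equivFinOfCardEq (by rw [Fintype.card_coe, compl_card_fin _ T.2])
    with heqv_def
  set πf : {T : Finset (Fin n) // T.card = t} → Fin n → Fin (n - t) :=
    fun T x => if hx : x ∈ (T.1)ᶜ then eqv T ⟨x, hx⟩ else ⟨0, hnt⟩ with hπf_def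
  have hπinj : ∀ T, Set.InjOn (πf T) ↑(T.1ᶜ) := by
    intro T x hx y hy hEq
    have hx' : x ∈ (T.1)ᶜ := hx
    have hy' : y ∈ (T.1)ᶜ := hy
    simp only [hπf_def] at hEq
    rw [dif_pos hx', dif_pos hy'] at hEq
    have := (eqv T).injective hEq
    exact Subtype.mk_eq_mk.1 this
  set g : {T : Finset (Fin n) // T.card = t} → Finset (Finset (Fin n)) →
      Finset (Finset (Fin (n - t))) :=
    fun T ℬ => (contr T.1 ℬ).image (Finset.image (πf T)) with hg_def
  have hcontr_mem : ∀ (T : {T : Finset (Fin n) // T.card = t}) (ℬ : Finset (Finset (Fin n))),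
      ∀ C ∈ contr T.1 ℬ, C ⊆ T.1ᶜ := by
    intro T ℬ C hC
    obtain ⟨B, _, rfl⟩ := (mem_image' _).1 hC
    intro a ha
    exact Finset.mem_compl.2 ((mem_sdiff' _).1 ha).2
  have hdet : ∀ ℬ₁ ∈ F, ∀ ℬ₂ ∈ F, (∀ A, f A ℬ₁ = f A ℬ₂) → ℬ₁ = ℬ₂ := by
    have hcard : ∀ ℬ ∈ F, ∀ B ∈ ℬ, B.card = r := by
      intro ℬ hℬ B hB
      rcases Finset.mem_insert.1 hℬ with rfl | hℬ'
      · exact absurd hB (Finset.notMem_empty B)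
      · exact ((Finset.mem_filter.1 hℬ').2).2.1 B hB
    have haux : ∀ ℬ₁ ∈ F, ∀ ℬ₂ ∈ F, (∀ A, f A ℬ₁ = f A ℬ₂) → ℬ₁ ⊆ ℬ₂ := by
      intro ℬ₁ h1 ℬ₂ h2 hf' B hB
      have hBr : B.card = r := hcard ℬ₁ h1 B hB
      have hAB := hf' ⟨B, hBr⟩
      simp only [hf_def] at hAB
      rwa [← hAB]
    intro ℬ₁ h1 ℬ₂ h2 hf'
    exact Finset.Subset.antisymm (haux ℬ₁ h1 ℬ₂ h2 hf')
      (haux ℬ₂ h2 ℬ₁ h1 fun A => (hf' A).symm)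
  have hg' : ∀ T, ∀ ℬ₁ ∈ F, ∀ ℬ₂ ∈ F, g T ℬ₁ = g T ℬ₂ → ∀ A ∈ Sf T, f A ℬ₁ = f A ℬ₂ := by
    intro T ℬ₁ _ ℬ₂ _ hEq A hA
    have hTA : T.1 ⊆ A.1 := by
      simp only [hSf_def] at hA
      exact ((mem_filter' _).1 hA).2
    simp only [hg_def] at hEq
    have hc : contr T.1 ℬ₁ = contr T.1 ℬ₂ := by
      apply image_image_inj (πf T) (T.1ᶜ) (hπinj T) _ _ (hcontr_mem T ℬ₁) (hcontr_mem T ℬ₂)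
      convert hEq using 2 <;> exact image_fun_inst_irrel _ _ _
    simp only [hf_def]
    apply propext
    rw [mem_contr_iff T.1 ℬ₁ A.1 hTA, mem_contr_iff T.1 ℬ₂ A.1 hTA, hc]
  have hmaps : ∀ T, ∀ ℬ ∈ F, g T ℬ ∈ insert ∅ (MF (n - t) (r - t)) := by
    intro T ℬ hℬF
    rcases Finset.eq_empty_or_nonempty (contr T.1 ℬ) with hemp | hne
    · simp only [hg_def, hemp]
      rw [image_empty']
      exact Finset.mem_insert_self _ _
    · have hℬM : ℬ ∈ MF n r := by
        rcases Finset.mem_insert.1 hℬF with rfl | h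
        · exfalso
          obtain ⟨C0, hC0⟩ := hne
          obtain ⟨B, hB, _⟩ := (mem_image' _).1 hC0
          exact absurd ((mem_filter' _).1 hB).1 (Finset.notMem_empty B)
        · exact h
      obtain ⟨hNE, hcards, hExch⟩ := (Finset.mem_filter.1 hℬM).2
      refine Finset.mem_insert.2 (Or.inr (Finset.mem_filter.2 ⟨Finset.mem_univ _, ?_, ?_, ?_⟩))
      · simp only [hg_def]
        exact image_nonempty' _ _ hne
      · intro C hC
        simp only [hg_def] at hC
        obtain ⟨C0, hC0, rfl⟩ := (mem_image' _).1 hC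
        obtain ⟨B, hB, rfl⟩ := (mem_image' _).1 hC0
        obtain ⟨hBℬ, hTB⟩ := (mem_filter' _).1 hB
        rw [card_image_of_injOn' _ ((hπinj T).mono
          (fun a ha => Finset.mem_coe.2 (Finset.mem_compl.2
            ((mem_sdiff' _).1 (Finset.mem_coe.1 ha)).2)))]
        rw [card_sdiff' _ hTB, hcards B hBℬ, T.2]
      · simp only [hg_def]
        have hex := image_exchange (πf T) (T.1ᶜ) (hπinj T) _ (hcontr_mem T ℬ)
          (contr_exchange T.1 ℬ hExch)
        convert hex using 2 <;> exact image_fun_inst_irrel _ _ _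
  have hshear := shearer F f hdet Sf (r.choose t)
    (by
      intro A
      have hch : r.choose t = (A.1.powersetCard t).card := by
        rw [Finset.card_powersetCard, A.2]
      rw [hch]
      refine le_of_eq (Finset.card_bij (fun S hS => ⟨S, (Finset.mem_powersetCard.1 hS).2⟩)
        ?_ ?_ ?_)
      · intro S hS
        refine (mem_filter' _).2 ⟨Finset.mem_univ _, ?_⟩
        simp only [hSf_def, Finset.mem_filter, Finset.mem_univ, true_and]
        exact (Finset.mem_powersetCard.1 hS).1
      · intro S1 h1 S2 h2 hEq
        exact Subtype.mk_eq_mk.1 hEq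
      · intro T' hT'
        have hT'' : A ∈ Sf T' := ((mem_filter' _).1 hT').2
        simp only [hSf_def, Finset.mem_filter, Finset.mem_univ, true_and] at hT''
        exact ⟨T'.1, Finset.mem_powersetCard.2 ⟨hT'', T'.2⟩, Subtype.eta _ _⟩)
    g hg'
  have hκcard : Fintype.card {T : Finset (Fin n) // T.card = t} = n.choose t := by
    rw [Fintype.card_finset_len, Fintype.card_fin]
  have hinsMF : (insert ∅ (MF (n - t) (r - t))).card = matroidCount (n - t) (r - t) + 1 := by
    rw [Finset.card_insert_of_notMem (empty_not_mem_MF _ _), matroidCount_eq]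
  have h4 := Finset.sum_le_sum (s := (Finset.univ : Finset {T : Finset (Fin n) // T.card = t}))
    (fun T _ => log_card_image_le (fun a b => Classical.propDecidable (a = b)) F (g T)
      (insert ∅ (MF (n - t) (r - t))) hFne (hmaps T))
  have h5 : ∑ _T : {T : Finset (Fin n) // T.card = t},
      Real.log (((insert ∅ (MF (n - t) (r - t))).card : ℝ))
      = (n.choose t : ℝ) * Real.log ((matroidCount (n - t) (r - t) : ℝ) + 1) := by
    rw [Finset.sum_const, Finset.card_univ, hκcard, nsmul_eq_mul, hinsMF]
    congr 2
    push_cast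
    ring
  have hlhs : Real.log ((F.card : ℝ)) = Real.log ((matroidCount n r : ℝ) + 1) := by
    rw [hFcard]
    congr 1
    push_cast
    ring
  calc (r.choose t : ℝ) * Real.log ((matroidCount n r : ℝ) + 1)
      = (r.choose t : ℝ) * Real.log ((F.card : ℝ)) := by rw [hlhs]
    _ ≤ _ := le_trans hshear (le_trans h4 (le_of_eq h5))
lemma count_rank_zero (k : ℕ) : matroidCount k 0 = 1 := by
  rw [matroidCount_eq]
  rw [Finset.card_eq_one]
  refine ⟨{∅}, ?_⟩
  ext ℬ
  simp only [MF, Finset.mem_filter, Finset.mem_univ, true_and, Finset.mem_singleton]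
  constructor
  · rintro ⟨hne, hcards, _⟩
    have hall : ∀ B ∈ ℬ, B = ∅ := fun B hB => Finset.card_eq_zero.1 (hcards B hB)
    obtain ⟨B0, hB0⟩ := hne
    refine Finset.eq_singleton_iff_unique_mem.2 ⟨(hall B0 hB0) ▸ hB0, fun B hB => hall B hB⟩
  · rintro rfl
    refine ⟨⟨∅, Finset.mem_singleton_self ∅⟩, ?_, ?_⟩
    · intro B hB
      rw [Finset.mem_singleton.1 hB]
      simp
    · intro B hB B' hB' e he
      exact absurd he (by rw [Finset.mem_singleton.1 hB]; simp)

lemma count_le_pow (n r : ℕ) : matroidCount n r + 1 ≤ 2 ^ (n.choose r) := by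
  have hcard : (Finset.univ.filter fun B : Finset (Fin n) => B.card = r).card = n.choose r := by
    rw [← Fintype.card_subtype, Fintype.card_finset_len, Fintype.card_fin]
  have h1 : (insert ∅ (MF n r)).card = matroidCount n r + 1 := by
    rw [Finset.card_insert_of_notMem (empty_not_mem_MF n r), matroidCount_eq]
  rw [← h1]
  calc (insert ∅ (MF n r)).card
      ≤ ((Finset.univ.filter fun B : Finset (Fin n) => B.card = r).powerset).card := by
        apply Finset.card_le_card
        intro ℬ hℬ
        rw [Finset.mem_powerset]
        intro B hB
        refine Finset.mem_filter.2 ⟨Finset.mem_univ _, ?_⟩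
        rcases Finset.mem_insert.1 hℬ with rfl | h
        · exact absurd hB (Finset.notMem_empty B)
        · exact ((Finset.mem_filter.1 h).2).2.1 B hB
    _ = 2 ^ (n.choose r) := by rw [Finset.card_powerset, hcard]

end ShearerAux


theorem contraction_inequality (n r t : ℕ) (htr : t ≤ r) (hrn : r ≤ n) :
    (1 / (n.choose r : ℝ)) * Real.logb 2 (matroidCount n r + 1) ≤
      (1 / ((n - t).choose (r - t) : ℝ)) * Real.logb 2 (matroidCount (n - t) (r - t) + 1) := by
  have ha : (0:ℝ) < (n.choose r : ℝ) := by exact_mod_cast Nat.choose_pos hrn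
  rcases eq_or_lt_of_le htr with rfl | htlt
  · -- t = r
    rw [Nat.sub_self, ShearerAux.count_rank_zero, Nat.choose_zero_right]
    have hrhs : (1 / ((1:ℕ) : ℝ)) * Real.logb 2 (((1:ℕ) : ℝ) + 1) = 1 := by
      norm_num
    have hlog : Real.logb 2 ((matroidCount n t : ℝ) + 1) ≤ (n.choose t : ℝ) := by
      have hb := ShearerAux.count_le_pow n t
      have hb' : ((matroidCount n t : ℝ) + 1) ≤ (2:ℝ) ^ (n.choose t) := by exact_mod_cast hb
      have hpos : (0:ℝ) < (matroidCount n t : ℝ) + 1 := by positivity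
      calc Real.logb 2 ((matroidCount n t : ℝ) + 1)
          ≤ Real.logb 2 ((2:ℝ) ^ (n.choose t)) := by
            apply Real.logb_le_logb_of_le (by norm_num) hpos hb'
        _ = (n.choose t : ℝ) := by
            rw [Real.logb_pow, Real.logb_self_eq_one (by norm_num)]
            ring
    have hlognn : 0 ≤ Real.logb 2 ((matroidCount n t : ℝ) + 1) := by
      apply Real.logb_nonneg (by norm_num)
      have : (0:ℝ) ≤ (matroidCount n t : ℝ) := Nat.cast_nonneg _
      linarith
    calc (1 / (n.choose t : ℝ)) * Real.logb 2 ((matroidCount n t : ℝ) + 1)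
        ≤ (1 / (n.choose t : ℝ)) * (n.choose t : ℝ) := by
          apply mul_le_mul_of_nonneg_left hlog (by positivity)
      _ = 1 := by field_simp
      _ = (1 / ((1:ℕ) : ℝ)) * Real.logb 2 (((1:ℕ) : ℝ) + 1) := hrhs.symm
  · -- t < r
    have hmain := ShearerAux.main_count n r t htlt hrn
    have hb' : (0:ℝ) < ((n - t).choose (r - t) : ℝ) := by
      exact_mod_cast Nat.choose_pos (by omega : r - t ≤ n - t)
    have hk : (0:ℝ) < (r.choose t : ℝ) := by exact_mod_cast Nat.choose_pos htlt.le
    have hc : (0:ℝ) < Real.log 2 := Real.log_pos (by norm_num)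
    have hNat : n.choose r * r.choose t = n.choose t * (n - t).choose (r - t) :=
      Nat.choose_mul htlt.le
    have hidR : (n.choose r : ℝ) * (r.choose t : ℝ)
        = (n.choose t : ℝ) * ((n - t).choose (r - t) : ℝ) := by exact_mod_cast hNat
    have h4 : ((n - t).choose (r - t) : ℝ) * Real.log ((matroidCount n r : ℝ) + 1)
        ≤ (n.choose r : ℝ) * Real.log ((matroidCount (n - t) (r - t) : ℝ) + 1) := by
      have h5 : (r.choose t : ℝ) *
            (((n - t).choose (r - t) : ℝ) * Real.log ((matroidCount n r : ℝ) + 1))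
          ≤ (r.choose t : ℝ) *
            ((n.choose r : ℝ) * Real.log ((matroidCount (n - t) (r - t) : ℝ) + 1)) := by
        calc (r.choose t : ℝ) *
              (((n - t).choose (r - t) : ℝ) * Real.log ((matroidCount n r : ℝ) + 1))
            = ((n - t).choose (r - t) : ℝ) *
              ((r.choose t : ℝ) * Real.log ((matroidCount n r : ℝ) + 1)) := by ring
          _ ≤ ((n - t).choose (r - t) : ℝ) *
              ((n.choose t : ℝ) * Real.log ((matroidCount (n - t) (r - t) : ℝ) + 1)) :=
              mul_le_mul_of_nonneg_left hmain hb'.le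
          _ = (r.choose t : ℝ) *
              ((n.choose r : ℝ) * Real.log ((matroidCount (n - t) (r - t) : ℝ) + 1)) := by
              have : ((n - t).choose (r - t) : ℝ) * (n.choose t : ℝ)
                  = (r.choose t : ℝ) * (n.choose r : ℝ) := by
                rw [mul_comm]
                rw [show (r.choose t : ℝ) * (n.choose r : ℝ)
                  = (n.choose r : ℝ) * (r.choose t : ℝ) from by ring, hidR]
              calc ((n - t).choose (r - t) : ℝ) *
                    ((n.choose t : ℝ) * Real.log ((matroidCount (n - t) (r - t) : ℝ) + 1))
                  = (((n - t).choose (r - t) : ℝ) * (n.choose t : ℝ)) *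
                    Real.log ((matroidCount (n - t) (r - t) : ℝ) + 1) := by ring
                _ = ((r.choose t : ℝ) * (n.choose r : ℝ)) *
                    Real.log ((matroidCount (n - t) (r - t) : ℝ) + 1) := by rw [this]
                _ = (r.choose t : ℝ) *
                    ((n.choose r : ℝ) * Real.log ((matroidCount (n - t) (r - t) : ℝ) + 1)) := by
                    ring
      exact le_of_mul_le_mul_left h5 hk
    simp only [Real.logb]
    rw [show (1 / (n.choose r : ℝ)) * (Real.log ((matroidCount n r : ℝ) + 1) / Real.log 2)
        = Real.log ((matroidCount n r : ℝ) + 1) / ((n.choose r : ℝ) * Real.log 2) from by ring]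
    rw [show (1 / ((n - t).choose (r - t) : ℝ)) *
          (Real.log ((matroidCount (n - t) (r - t) : ℝ) + 1) / Real.log 2)
        = Real.log ((matroidCount (n - t) (r - t) : ℝ) + 1) /
          (((n - t).choose (r - t) : ℝ) * Real.log 2) from by ring]
    rw [div_le_div_iff₀ (by positivity) (by positivity)]
    calc Real.log ((matroidCount n r : ℝ) + 1) * (((n - t).choose (r - t) : ℝ) * Real.log 2)
        = (((n - t).choose (r - t) : ℝ) * Real.log ((matroidCount n r : ℝ) + 1)) * Real.log 2 :=
          by ring
      _ ≤ ((n.choose r : ℝ) * Real.log ((matroidCount (n - t) (r - t) : ℝ) + 1)) * Real.log 2 :=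
          mul_le_mul_of_nonneg_right h4 hc.le
      _ = Real.log ((matroidCount (n - t) (r - t) : ℝ) + 1) * ((n.choose r : ℝ) * Real.log 2) :=
          by ring
end

section
/- The number of collections ℬ of 2-element subsets of [n] satisfying the base exchange axiom (including the empty collection) is at most B_{n+1}, the (n+1)-st Bell number. -/
open scoped Classical

/-- The `m`-th Bell number: the number of partitions of an `m`-element set. -/
noncomputable def bell (m : ℕ) : ℕ :=
  Nat.card (Finpartition (Finset.univ : Finset (Fin m)))

namespace RankTwoAux

variable {n : ℕ}

def nl (ℬ : Finset (Finset (Fin n))) (a : Fin (n+1)) : Prop :=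
  ∃ B ∈ ℬ, ∃ x ∈ B, Fin.castSucc x = a

def edg (ℬ : Finset (Finset (Fin n))) (a b : Fin (n+1)) : Prop :=
  ∃ x y : Fin n, x ≠ y ∧ Fin.castSucc x = a ∧ Fin.castSucc y = b ∧
    ({x, y} : Finset (Fin n)) ∈ ℬ

def rel (ℬ : Finset (Finset (Fin n))) (a b : Fin (n+1)) : Prop :=
  (nl ℬ a ↔ nl ℬ b) ∧ ¬ edg ℬ a b

lemma not_nl_last (ℬ : Finset (Finset (Fin n))) : ¬ nl ℬ (Fin.last n) := by
  rintro ⟨B, _, x, _, hx⟩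
  exact absurd hx (Fin.castSucc_lt_last x).ne

lemma not_edg_last (ℬ : Finset (Finset (Fin n))) (a : Fin (n+1)) :
    ¬ edg ℬ a (Fin.last n) := by
  rintro ⟨x, y, _, _, hy, _⟩
  exact absurd hy (Fin.castSucc_lt_last y).ne

lemma edg_symm {ℬ : Finset (Finset (Fin n))} {a b : Fin (n+1)}
    (h : edg ℬ a b) : edg ℬ b a := by
  obtain ⟨x, y, hxy, hx, hy, hB⟩ := h
  exact ⟨y, x, hxy.symm, hy, hx, by rwa [Finset.pair_comm]⟩

lemma factA {ℬ : Finset (Finset (Fin n))}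
    (h2 : ∀ B ∈ ℬ, B.card = 2) (hex : ExchangeAxiom ℬ)
    {x z y : Fin n} (hxz : ({x, z} : Finset (Fin n)) ∈ ℬ)
    (hyx : y ≠ x) (hyz : y ≠ z) {C : Finset (Fin n)} (hC : C ∈ ℬ) (hyC : y ∈ C) :
    ({x, y} : Finset (Fin n)) ∈ ℬ ∨ ({z, y} : Finset (Fin n)) ∈ ℬ := by
  obtain ⟨u, v, huv, rfl⟩ := Finset.card_eq_two.mp (h2 C hC)
  obtain ⟨w, hwy, hCw⟩ : ∃ w, w ≠ y ∧ ({u, v} : Finset (Fin n)) = {y, w} := by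
    rcases Finset.mem_insert.mp hyC with h | h
    · subst h; exact ⟨v, fun hvu => huv hvu.symm, rfl⟩
    · rw [Finset.mem_singleton] at h; subst h
      exact ⟨u, huv, Finset.pair_comm u y⟩
  rw [hCw] at hC
  by_cases hwx : w = x
  · left; rwa [hwx, Finset.pair_comm] at hC
  by_cases hwz : w = z
  · right; rwa [hwz, Finset.pair_comm] at hC
  obtain ⟨f, hf, hf2⟩ := hex _ hC _ hxz w (by simp [hwx, hwz])
  have hf2' : ({f, y} : Finset (Fin n)) ∈ ℬ := by
    convert hf2 using 1
    ext t
    simp only [Finset.mem_insert, Finset.mem_singleton, Finset.mem_union,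
      Finset.mem_erase]
    have := hwy
    aesop
  simp only [Finset.mem_sdiff, Finset.mem_insert, Finset.mem_singleton] at hf
  rcases hf.1 with h | h
  · left; rwa [h] at hf2'
  · right; rwa [h] at hf2'

lemma rel_equiv {ℬ : Finset (Finset (Fin n))}
    (h2 : ∀ B ∈ ℬ, B.card = 2) (hex : ExchangeAxiom ℬ) :
    Equivalence (rel ℬ) := by
  constructor
  · intro a
    refine ⟨Iff.rfl, ?_⟩
    rintro ⟨x, y, hxy, hx, hy, _⟩
    exact hxy (Fin.castSucc_injective n (hx.trans hy.symm))
  · rintro a b ⟨h1, h2'⟩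
    exact ⟨h1.symm, fun h => h2' (edg_symm h)⟩
  · rintro a b c ⟨hab1, hab2⟩ ⟨hbc1, hbc2⟩
    refine ⟨hab1.trans hbc1, ?_⟩
    rintro ⟨x, z, hxz, hxa, hzc, hB⟩
    have hnla : nl ℬ a := ⟨_, hB, x, by simp, hxa⟩
    have hnlb : nl ℬ b := hab1.mp hnla
    obtain ⟨C, hC, y, hyC, hyb⟩ := hnlb
    by_cases hyx : y = x
    · exact hbc2 ⟨x, z, hxz, by rw [← hyb, hyx], hzc, hB⟩
    · by_cases hyz : y = z
      · exact hab2 ⟨x, y, fun h => hxz (h.trans hyz), hxa, hyb, by rwa [hyz]⟩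
      · rcases factA h2 hex hB hyx hyz hC hyC with h | h
        · exact hab2 ⟨x, y, fun hh => hyx hh.symm, hxa, hyb, h⟩
        · exact hbc2 ⟨y, z, hyz, hyb, hzc, by rwa [Finset.pair_comm]⟩

noncomputable def theSetoid (ℬ : Finset (Finset (Fin n)))
    (h2 : ∀ B ∈ ℬ, B.card = 2) (hex : ExchangeAxiom ℬ) : Setoid (Fin (n+1)) :=
  ⟨rel ℬ, rel_equiv h2 hex⟩

lemma rel_last_iff (ℬ : Finset (Finset (Fin n))) (a : Fin (n+1)) :
    rel ℬ a (Fin.last n) ↔ ¬ nl ℬ a :=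
  ⟨fun ⟨h1, _⟩ hn => not_nl_last ℬ (h1.mp hn),
   fun hn => ⟨iff_of_false hn (not_nl_last ℬ), not_edg_last ℬ a⟩⟩

lemma edg_iff (ℬ : Finset (Finset (Fin n))) (a b : Fin (n+1)) :
    edg ℬ a b ↔ nl ℬ a ∧ nl ℬ b ∧ ¬ rel ℬ a b := by
  constructor
  · rintro ⟨x, y, hxy, hx, hy, hB⟩
    exact ⟨⟨_, hB, x, by simp, hx⟩, ⟨_, hB, y, by simp, hy⟩,
      fun h => h.2 ⟨x, y, hxy, hx, hy, hB⟩⟩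
  · rintro ⟨na, nb, hnr⟩
    by_contra he
    exact hnr ⟨iff_of_true na nb, he⟩

lemma eq_of_rel_eq {ℬ₁ ℬ₂ : Finset (Finset (Fin n))}
    (h2a : ∀ B ∈ ℬ₁, B.card = 2) (h2b : ∀ B ∈ ℬ₂, B.card = 2)
    (hr : ∀ a b, rel ℬ₁ a b ↔ rel ℬ₂ a b) : ℬ₁ = ℬ₂ := by
  have hnl : ∀ a, nl ℬ₁ a ↔ nl ℬ₂ a := fun a =>
    not_iff_not.mp (((rel_last_iff ℬ₁ a).symm.trans (hr _ _)).trans (rel_last_iff ℬ₂ a))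
  have hedg : ∀ a b, edg ℬ₁ a b ↔ edg ℬ₂ a b := fun a b => by
    rw [edg_iff, edg_iff, hnl, hnl, hr]
  have key : ∀ (ℬ₁' ℬ₂' : Finset (Finset (Fin n))),
      (∀ B ∈ ℬ₁', B.card = 2) → (∀ a b, edg ℬ₁' a b → edg ℬ₂' a b) → ℬ₁' ⊆ ℬ₂' := by
    intro ℬ₁' ℬ₂' h2' he B hB
    obtain ⟨x, y, hxy, rfl⟩ := Finset.card_eq_two.mp (h2' B hB)
    obtain ⟨x', y', hxy', hx, hy, hB2⟩ :=
      he _ _ ⟨x, y, hxy, rfl, rfl, hB⟩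
    rw [Fin.castSucc_inj] at hx hy
    rwa [hx, hy] at hB2
  exact Finset.Subset.antisymm
    (key ℬ₁ ℬ₂ h2a fun a b => (hedg a b).mp)
    (key ℬ₂ ℬ₁ h2b fun a b => (hedg a b).mpr)

end RankTwoAux

open RankTwoAux in
theorem count_rank_two_collections_le_bell (n : ℕ) :
    (Finset.univ.filter (fun ℬ : Finset (Finset (Fin n)) =>
      (∀ B ∈ ℬ, B.card = 2) ∧ ExchangeAxiom ℬ)).card ≤ bell (n + 1) := by
  set S := Finset.univ.filter (fun ℬ : Finset (Finset (Fin n)) =>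
      (∀ B ∈ ℬ, B.card = 2) ∧ ExchangeAxiom ℬ) with hS
  have hcard : Fintype.card {ℬ // ℬ ∈ S} ≤
      Fintype.card (Finpartition (Finset.univ : Finset (Fin (n+1)))) := by
    apply Fintype.card_le_of_injective
      (fun p => Finpartition.ofSetoid
        (theSetoid p.1 ((Finset.mem_filter.mp p.2).2.1) ((Finset.mem_filter.mp p.2).2.2)))
    intro p q h
    dsimp only at h
    apply Subtype.ext
    apply eq_of_rel_eq ((Finset.mem_filter.mp p.2).2.1) ((Finset.mem_filter.mp q.2).2.1)
    intro a b
    have h1 := Finpartition.mem_part_ofSetoid_iff_rel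
      (s := theSetoid p.1 ((Finset.mem_filter.mp p.2).2.1) ((Finset.mem_filter.mp p.2).2.2))
      (a := a) (b := b)
    have h2' := Finpartition.mem_part_ofSetoid_iff_rel
      (s := theSetoid q.1 ((Finset.mem_filter.mp q.2).2.1) ((Finset.mem_filter.mp q.2).2.2))
      (a := a) (b := b)
    exact (h ▸ h1).symm.trans h2'
  rw [Fintype.card_coe] at hcard
  unfold bell
  rwa [Nat.card_eq_fintype_card]
end

section
/- For 2 ≤ r ≤ n, log₂ m_{n,r} ≤ (2 · log₂(n+1) / (n+2)) · C(n+2, r), where m_{n,r} is the number of rank-r matroids on [n]. -/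
open scoped Classical

open scoped NNReal

namespace MatroidCountAux

lemma geom_superadd {κ : Type*} (s : Finset κ) (hs : s.Nonempty) (x y : κ → ℝ≥0) :
    (∏ j ∈ s, x j) ^ (1 / (s.card : ℝ)) + (∏ j ∈ s, y j) ^ (1 / (s.card : ℝ)) ≤
      (∏ j ∈ s, (x j + y j)) ^ (1 / (s.card : ℝ)) := by
  have hk : (0:ℝ) < s.card := by exact_mod_cast Finset.card_pos.mpr hs
  have hkne : (1 / (s.card : ℝ)) ≠ 0 := by positivity
  by_cases h0 : ∃ j ∈ s, x j + y j = 0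
  · obtain ⟨j, hj, hj0⟩ := h0
    have hx0 : x j = 0 := by
      have h1 : x j ≤ x j + y j := self_le_add_right _ _
      rw [hj0] at h1; exact le_zero_iff.mp h1
    have hy0 : y j = 0 := by
      have h1 : y j ≤ x j + y j := self_le_add_left _ _
      rw [hj0] at h1; exact le_zero_iff.mp h1
    rw [Finset.prod_eq_zero hj hx0, Finset.prod_eq_zero hj hy0,
      NNReal.zero_rpow hkne, add_zero]
    exact zero_le
  · push_neg at h0
    set S : κ → ℝ≥0 := fun j => x j + y j with hS
    have hSpos : ∀ j ∈ s, S j ≠ 0 := h0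
    have hProdS : (∏ j ∈ s, S j) ≠ 0 := Finset.prod_ne_zero_iff.mpr hSpos
    -- key: ∏ (x j / S j)^(1/k) ≤ ∑ (1/k) * (x j / S j)
    have key : ∀ z : κ → ℝ≥0, (∀ j ∈ s, z j ≤ S j) →
        (∏ j ∈ s, z j) ^ (1 / (s.card : ℝ)) ≤
          (∑ j ∈ s, (s.card : ℝ≥0)⁻¹ * (z j / S j)) * (∏ j ∈ s, S j) ^ (1 / (s.card : ℝ)) := by
      intro z hz
      have hw : (∑ _j ∈ s, (s.card : ℝ≥0)⁻¹) = 1 := by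
        rw [Finset.sum_const, nsmul_eq_mul]
        rw [mul_inv_cancel₀]
        exact_mod_cast hk.ne'
      have amgm := NNReal.geom_mean_le_arith_mean_weighted s (fun _ => (s.card : ℝ≥0)⁻¹)
        (fun j => z j / S j) hw
      have hcoe : (((s.card : ℝ≥0)⁻¹ : ℝ≥0) : ℝ) = 1 / (s.card : ℝ) := by
        push_cast; rw [one_div]
      simp only [hcoe] at amgm
      have hprod : (∏ j ∈ s, (z j / S j) ^ (1 / (s.card : ℝ))) =
          (∏ j ∈ s, z j / S j) ^ (1 / (s.card : ℝ)) := by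
        rw [← NNReal.finset_prod_rpow]
      rw [hprod] at amgm
      have hdiv : (∏ j ∈ s, z j / S j) = (∏ j ∈ s, z j) / (∏ j ∈ s, S j) := by
        rw [Finset.prod_div_distrib]
      rw [hdiv] at amgm
      have := mul_le_mul_left amgm ((∏ j ∈ s, S j) ^ (1 / (s.card : ℝ)))
      calc (∏ j ∈ s, z j) ^ (1 / (s.card : ℝ))
          = ((∏ j ∈ s, z j) / (∏ j ∈ s, S j)) ^ (1 / (s.card : ℝ)) *
              (∏ j ∈ s, S j) ^ (1 / (s.card : ℝ)) := by
            rw [← NNReal.mul_rpow, div_mul_cancel₀]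
            exact hProdS
        _ ≤ _ := this
    have hx' := key x (fun j _ => le_add_right le_rfl)
    have hy' := key y (fun j _ => by simp [hS])
    have hsum : (∑ j ∈ s, (s.card : ℝ≥0)⁻¹ * (x j / S j)) +
        (∑ j ∈ s, (s.card : ℝ≥0)⁻¹ * (y j / S j)) ≤ 1 := by
      rw [← Finset.sum_add_distrib]
      have : ∀ j ∈ s, (s.card : ℝ≥0)⁻¹ * (x j / S j) + (s.card : ℝ≥0)⁻¹ * (y j / S j)
          = (s.card : ℝ≥0)⁻¹ := by
        intro j hj
        rw [← mul_add, ← add_div, div_self (hSpos j hj), mul_one]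
      rw [Finset.sum_congr rfl this, Finset.sum_const, nsmul_eq_mul, mul_inv_cancel₀]
      exact_mod_cast hk.ne'
    calc (∏ j ∈ s, x j) ^ (1 / (s.card : ℝ)) + (∏ j ∈ s, y j) ^ (1 / (s.card : ℝ))
        ≤ ((∑ j ∈ s, (s.card : ℝ≥0)⁻¹ * (x j / S j)) +
            (∑ j ∈ s, (s.card : ℝ≥0)⁻¹ * (y j / S j))) * (∏ j ∈ s, S j) ^ (1 / (s.card : ℝ)) := by
          rw [add_mul]; exact add_le_add hx' hy'
      _ ≤ 1 * (∏ j ∈ s, S j) ^ (1 / (s.card : ℝ)) := mul_le_mul_left hsum _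
      _ = _ := by rw [one_mul]


lemma shearer {ι κ : Type*} [DecidableEq ι] [DecidableEq (ι → Bool)] (fam : κ → Finset ι) (k : ℕ) (hk : 0 < k)
    (I : Finset ι) :
    ∀ (J : Finset κ) (F : Finset (ι → Bool)),
      (∀ i ∈ I, (J.filter (fun j => i ∈ fam j)).card = k) →
      (∀ f ∈ F, ∀ i, i ∉ I → f i = false) →
      ((F.card : ℝ≥0)) ^ k ≤
        ∏ j ∈ J, (((F.image fun f i => if i ∈ fam j then f i else false)).card : ℝ≥0) := by
  induction I using Finset.induction_on with
  | empty =>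
    intro J F _ hsupp
    rcases F.eq_empty_or_nonempty with rfl | hF
    · simp [zero_pow hk.ne']
    · have hcard : F.card = 1 := by
        refine le_antisymm ?_ (Finset.card_pos.mpr hF)
        refine Finset.card_le_one.mpr (fun f hf g hg => ?_)
        funext i
        rw [hsupp f hf i (Finset.notMem_empty i), hsupp g hg i (Finset.notMem_empty i)]
      rw [hcard]
      push_cast
      rw [one_pow]
      refine Finset.one_le_prod' (fun j _ => ?_)
      have : 0 < ((F.image fun f i => if i ∈ fam j then f i else false)).card :=
        Finset.card_pos.mpr (hF.image _)
      exact_mod_cast this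
  | @insert i₀ I' hi₀ ih =>
    intro J F hcov hsupp
    set mask : κ → (ι → Bool) → (ι → Bool) := fun j f i => if i ∈ fam j then f i else false with hmask
    set upd : (ι → Bool) → (ι → Bool) := fun f => Function.update f i₀ false with hupd
    set Ft := F.filter (fun f => f i₀ = true) with hFt
    set Ff := F.filter (fun f => f i₀ = false) with hFf
    set Fa := Ft.image upd with hFa
    set Fb := Ff.image upd with hFb
    -- cardinalities
    have hupdinj : ∀ (X : Finset (ι → Bool)) (a : Bool), (∀ f ∈ X, f i₀ = a) →
        (X.image upd).card = X.card := by
      intro X a hX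
      refine Finset.card_image_of_injOn (fun f hf g hg hfg => ?_)
      funext i
      by_cases hi : i = i₀
      · subst hi; rw [hX f hf, hX g hg]
      · have := congrFun hfg i
        simpa [hupd, Function.update_of_ne hi] using this
    have hFtcard : Fa.card = Ft.card := hupdinj Ft true (fun f hf => (Finset.mem_filter.mp hf).2)
    have hFfcard : Fb.card = Ff.card := hupdinj Ff false (fun f hf => (Finset.mem_filter.mp hf).2)
    have hsplit : F.card = Fa.card + Fb.card := by
      rw [hFtcard, hFfcard]
      have h1 : Ff = F.filter (fun f => ¬ f i₀ = true) := by
        rw [hFf]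
        exact Finset.filter_congr (fun f _ => by simp [Bool.not_eq_true])
      rw [hFt, h1]
      exact (Finset.card_filter_add_card_filter_not _).symm
    -- support of Fa, Fb
    have hsuppa : ∀ (X : Finset (ι → Bool)), X ⊆ F → ∀ f ∈ X.image upd, ∀ i, i ∉ I' → f i = false := by
      intro X hXF f hf i hiI'
      obtain ⟨g, hg, rfl⟩ := Finset.mem_image.mp hf
      by_cases hi : i = i₀
      · subst hi; simp [hupd]
      · rw [hupd]
        simp only [Function.update_of_ne hi]
        exact hsupp g (hXF hg) i (by simp [hi, hiI'])
    -- coverage on I'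
    have hcov' : ∀ i ∈ I', (J.filter (fun j => i ∈ fam j)).card = k :=
      fun i hi => hcov i (Finset.mem_insert_of_mem hi)
    have iha := ih J Fa hcov' (hsuppa Ft (Finset.filter_subset _ _))
    have ihb := ih J Fb hcov' (hsuppa Ff (Finset.filter_subset _ _))
    -- J split
    set J₁ := J.filter (fun j => i₀ ∈ fam j) with hJ₁
    set J₂ := J.filter (fun j => ¬ i₀ ∈ fam j) with hJ₂
    have hJ₁card : J₁.card = k := hcov i₀ (Finset.mem_insert_self _ _)
    have hJ₁ne : J₁.Nonempty := Finset.card_pos.mp (hJ₁card ▸ hk)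
    -- projections
    set c : κ → ℝ≥0 := fun j => (((F.image (mask j))).card : ℝ≥0) with hc
    set ca : κ → ℝ≥0 := fun j => (((Fa.image (mask j))).card : ℝ≥0) with hca
    set cb : κ → ℝ≥0 := fun j => (((Fb.image (mask j))).card : ℝ≥0) with hcb
    -- claim C1 : j ∈ J₂ → ca j ≤ c j and cb j ≤ c j
    have maskupd : ∀ j, i₀ ∉ fam j → ∀ f, mask j (upd f) = mask j f := by
      intro j hj f
      funext i
      by_cases hi : i ∈ fam j
      · have : i ≠ i₀ := fun h => hj (h ▸ hi)
        simp [hmask, hi, hupd, Function.update_of_ne this]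
      · simp [hmask, hi]
    have hC1 : ∀ j ∈ J₂, ca j ≤ c j ∧ cb j ≤ c j := by
      intro j hj
      have hj' : i₀ ∉ fam j := (Finset.mem_filter.mp hj).2
      constructor
      · have : Fa.image (mask j) ⊆ F.image (mask j) := by
          rw [hFa, Finset.image_image]
          intro g hg
          obtain ⟨f, hf, rfl⟩ := Finset.mem_image.mp hg
          exact Finset.mem_image.mpr ⟨f, Finset.filter_subset _ _ hf, (maskupd j hj' f).symm⟩
        simp only [hca, hc]
        exact_mod_cast Finset.card_le_card this
      · have : Fb.image (mask j) ⊆ F.image (mask j) := by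
          rw [hFb, Finset.image_image]
          intro g hg
          obtain ⟨f, hf, rfl⟩ := Finset.mem_image.mp hg
          exact Finset.mem_image.mpr ⟨f, Finset.filter_subset _ _ hf, (maskupd j hj' f).symm⟩
        simp only [hcb, hc]
        exact_mod_cast Finset.card_le_card this
    -- claim C2 : j ∈ J₁ → c j = ca j + cb j
    have hC2 : ∀ j ∈ J₁, c j = ca j + cb j := by
      intro j hj
      have hj' : i₀ ∈ fam j := (Finset.mem_filter.mp hj).2
      have hmaskt : ∀ f ∈ Ft, (mask j f) i₀ = true := by
        intro f hf; simp [hmask, hj', (Finset.mem_filter.mp hf).2]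
      have hmaskf : ∀ f ∈ Ff, (mask j f) i₀ = false := by
        intro f hf; simp [hmask, hj', (Finset.mem_filter.mp hf).2]
      have hFsplit : F.image (mask j) = (Ft.image (mask j)) ∪ (Ff.image (mask j)) := by
        rw [← Finset.image_union]
        congr 1
        rw [hFt, hFf, ← Finset.filter_or]
        refine (Finset.filter_true_of_mem (fun f _ => ?_)).symm
        cases h : f i₀ <;> simp [h]
      have hdisj : Disjoint (Ft.image (mask j)) (Ff.image (mask j)) := by
        rw [Finset.disjoint_left]
        intro g hg hg'
        obtain ⟨f, hf, rfl⟩ := Finset.mem_image.mp hg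
        obtain ⟨f', hf', he⟩ := Finset.mem_image.mp hg'
        have h1 := hmaskt f hf
        have h2 := hmaskf f' hf'
        rw [he] at h2
        rw [h1] at h2
        exact Bool.noConfusion h2
      -- commute mask and upd
      have hcomm : ∀ f, mask j (upd f) = upd (mask j f) := by
        intro f
        funext i
        by_cases hi : i = i₀
        · subst hi; simp [hmask, hupd, hj']
        · by_cases hmem : i ∈ fam j <;>
            simp [hmask, hupd, Function.update_of_ne hi, hmem]
      have hcardA : (Fa.image (mask j)).card = (Ft.image (mask j)).card := by
        rw [hFa, Finset.image_image]
        have : Ft.image (mask j ∘ upd) = (Ft.image (mask j)).image upd := by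
          rw [Finset.image_image]
          exact Finset.image_congr (fun f _ => hcomm f)
        rw [this]
        exact hupdinj _ true (fun g hg => by
          obtain ⟨f, hf, rfl⟩ := Finset.mem_image.mp hg; exact hmaskt f hf)
      have hcardB : (Fb.image (mask j)).card = (Ff.image (mask j)).card := by
        rw [hFb, Finset.image_image]
        have : Ff.image (mask j ∘ upd) = (Ff.image (mask j)).image upd := by
          rw [Finset.image_image]
          exact Finset.image_congr (fun f _ => hcomm f)
        rw [this]
        exact hupdinj _ false (fun g hg => by
          obtain ⟨f, hf, rfl⟩ := Finset.mem_image.mp hg; exact hmaskf f hf)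
      rw [hc, hca, hcb]
      simp only
      rw [hFsplit, Finset.card_union_of_disjoint hdisj, hcardA, hcardB]
      push_cast
      ring
    -- now the analytic assembly
    have hkR : (0:ℝ) < k := by exact_mod_cast hk
    have hrt : ∀ (x y : ℝ≥0), x ^ k ≤ y → x ≤ y ^ (1 / (k:ℝ)) := by
      intro x y h
      have h2 : (x ^ k) ^ (1/(k:ℝ)) ≤ y ^ (1/(k:ℝ)) :=
        NNReal.rpow_le_rpow (by exact_mod_cast h) (by positivity)
      calc x = (x ^ k) ^ (1/(k:ℝ)) := by
              rw [← NNReal.rpow_natCast x k, ← NNReal.rpow_mul, mul_one_div_cancel hkR.ne',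
                NNReal.rpow_one]
        _ ≤ _ := h2
    have hprodsplit : ∀ (g : κ → ℝ≥0), ∏ j ∈ J, g j = (∏ j ∈ J₁, g j) * ∏ j ∈ J₂, g j := by
      intro g
      rw [hJ₁, hJ₂]
      exact (Finset.prod_filter_mul_prod_filter_not J _ g).symm
    have key : (F.card : ℝ≥0) ≤ (∏ j ∈ J, c j) ^ (1/(k:ℝ)) := by
      have ha := hrt _ _ iha
      have hb := hrt _ _ ihb
      rw [hprodsplit ca] at ha
      rw [hprodsplit cb] at hb
      rw [NNReal.mul_rpow] at ha hb
      have hJ₂a : (∏ j ∈ J₂, ca j) ^ (1/(k:ℝ)) ≤ (∏ j ∈ J₂, c j) ^ (1/(k:ℝ)) :=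
        NNReal.rpow_le_rpow (Finset.prod_le_prod' (fun j hj => (hC1 j hj).1)) (by positivity)
      have hJ₂b : (∏ j ∈ J₂, cb j) ^ (1/(k:ℝ)) ≤ (∏ j ∈ J₂, c j) ^ (1/(k:ℝ)) :=
        NNReal.rpow_le_rpow (Finset.prod_le_prod' (fun j hj => (hC1 j hj).2)) (by positivity)
      have hsadd : (∏ j ∈ J₁, ca j) ^ (1/(k:ℝ)) + (∏ j ∈ J₁, cb j) ^ (1/(k:ℝ)) ≤
          (∏ j ∈ J₁, c j) ^ (1/(k:ℝ)) := by
        have := geom_superadd J₁ hJ₁ne ca cb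
        rw [hJ₁card] at this
        calc (∏ j ∈ J₁, ca j) ^ (1/(k:ℝ)) + (∏ j ∈ J₁, cb j) ^ (1/(k:ℝ))
            ≤ (∏ j ∈ J₁, (ca j + cb j)) ^ (1/(k:ℝ)) := this
          _ = (∏ j ∈ J₁, c j) ^ (1/(k:ℝ)) := by
              congr 1
              exact Finset.prod_congr rfl (fun j hj => (hC2 j hj).symm)
      calc (F.card : ℝ≥0) = (Fa.card : ℝ≥0) + (Fb.card : ℝ≥0) := by
            rw [hsplit]; push_cast; ring
        _ ≤ (∏ j ∈ J₁, ca j) ^ (1/(k:ℝ)) * (∏ j ∈ J₂, c j) ^ (1/(k:ℝ)) +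
            (∏ j ∈ J₁, cb j) ^ (1/(k:ℝ)) * (∏ j ∈ J₂, c j) ^ (1/(k:ℝ)) := by
            refine add_le_add ?_ ?_
            · exact le_trans ha (mul_le_mul_right hJ₂a _)
            · exact le_trans hb (mul_le_mul_right hJ₂b _)
        _ = ((∏ j ∈ J₁, ca j) ^ (1/(k:ℝ)) + (∏ j ∈ J₁, cb j) ^ (1/(k:ℝ))) *
              (∏ j ∈ J₂, c j) ^ (1/(k:ℝ)) := by ring
        _ ≤ (∏ j ∈ J₁, c j) ^ (1/(k:ℝ)) * (∏ j ∈ J₂, c j) ^ (1/(k:ℝ)) :=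
            mul_le_mul_left hsadd _
        _ = (∏ j ∈ J, c j) ^ (1/(k:ℝ)) := by
            rw [← NNReal.mul_rpow, ← hprodsplit c]
    have := pow_le_pow_left₀ zero_le key k
    calc ((F.card : ℝ≥0)) ^ k ≤ ((∏ j ∈ J, c j) ^ (1/(k:ℝ))) ^ k := this
      _ = ∏ j ∈ J, c j := by
          rw [← NNReal.rpow_natCast _ k, ← NNReal.rpow_mul, one_div_mul_cancel hkR.ne',
            NNReal.rpow_one]


section RankTwo

variable {β : Type*}

def IsLoop (𝒞 : Finset (Finset β)) (x : β) : Prop := ∀ C ∈ 𝒞, x ∉ C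

noncomputable def pcl (𝒞 : Finset (Finset β)) (G : Finset β) (x : β) : Finset β :=
  G.filter (fun z => z = x ∨ (¬ IsLoop 𝒞 z ∧ ({x, z} : Finset β) ∉ 𝒞))

noncomputable def prep (𝒞 : Finset (Finset β)) (G : Finset β) (x : β) : β :=
  if h : (pcl 𝒞 G x).Nonempty then h.choose else x

lemma choose_congr {s t : Finset β} (hs : s.Nonempty) (ht : t.Nonempty) (h : s = t) :
    hs.choose = ht.choose := by subst h; rfl

variable {𝒞 : Finset (Finset β)} {G : Finset β}

lemma nonloop_mem_ground (h2 : ∀ C ∈ 𝒞, C.card = 2 ∧ C ⊆ G) {x : β}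
    (hx : ¬ IsLoop 𝒞 x) : x ∈ G := by
  have hy' : ∃ C ∈ 𝒞, x ∈ C := by
    by_contra h
    push_neg at h
    exact hx (fun C hC => h C hC)
  obtain ⟨C, hC, hxC⟩ := hy'
  exact (h2 C hC).2 hxC

lemma self_mem_pcl (h2 : ∀ C ∈ 𝒞, C.card = 2 ∧ C ⊆ G) {x : β}
    (hx : ¬ IsLoop 𝒞 x) : x ∈ pcl 𝒞 G x :=
  Finset.mem_filter.mpr ⟨nonloop_mem_ground h2 hx, Or.inl rfl⟩

lemma prep_mem_pcl (h2 : ∀ C ∈ 𝒞, C.card = 2 ∧ C ⊆ G) {x : β}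
    (hx : ¬ IsLoop 𝒞 x) : prep 𝒞 G x ∈ pcl 𝒞 G x := by
  have hN : (pcl 𝒞 G x).Nonempty := ⟨x, self_mem_pcl h2 hx⟩
  rw [prep, dif_pos hN]
  exact hN.choose_spec

lemma prep_mem_ground (h2 : ∀ C ∈ 𝒞, C.card = 2 ∧ C ⊆ G) {x : β}
    (hx : ¬ IsLoop 𝒞 x) : prep 𝒞 G x ∈ G :=
  (Finset.mem_filter.mp (prep_mem_pcl h2 hx)).1

lemma rank2_trans_false (h2 : ∀ C ∈ 𝒞, C.card = 2 ∧ C ⊆ G) (hex : ExchangeAxiom 𝒞)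
    {x y z : β} (hxz : ({x, z} : Finset β) ∈ 𝒞)
    (hy : ¬ IsLoop 𝒞 y) (hyx : y ≠ x) (hyz : y ≠ z)
    (hxy : ({x, y} : Finset β) ∉ 𝒞) (hyz' : ({y, z} : Finset β) ∉ 𝒞) : False := by
  have hy' : ∃ C ∈ 𝒞, y ∈ C := by
    by_contra h
    push_neg at h
    exact hy (fun C hC => h C hC)
  obtain ⟨C, hC, hyC⟩ := hy'
  obtain ⟨a, b, hab, rfl⟩ := Finset.card_eq_two.mp (h2 _ hC).1
  have hw : ∃ w, w ≠ y ∧ ({y, w} : Finset β) = {a, b} := by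
    rcases Finset.mem_insert.mp hyC with rfl | hyb
    · exact ⟨b, fun h => hab h.symm, rfl⟩
    · have hyb' : y = b := Finset.mem_singleton.mp hyb
      subst hyb'
      exact ⟨a, fun h => hab h, Finset.pair_comm _ _⟩
  obtain ⟨w, hwy, hC'⟩ := hw
  rw [← hC'] at hC
  have hwx : w ≠ x := by
    intro h
    apply hxy
    rw [Finset.pair_comm x y, ← h]
    exact hC
  have hwz : w ≠ z := by
    intro h
    apply hyz'
    rw [← h]
    exact hC
  have hw_mem : w ∈ ({y, w} : Finset β) \ {x, z} := by
    rw [Finset.mem_sdiff]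
    constructor
    · exact Finset.mem_insert_of_mem (Finset.mem_singleton_self w)
    · intro hmem
      rcases Finset.mem_insert.mp hmem with h | h
      · exact hwx h
      · exact hwz (Finset.mem_singleton.mp h)
  obtain ⟨f, hf, hnew⟩ := hex _ hC _ hxz w hw_mem
  have herase : ({y, w} : Finset β).erase w = {y} := by
    rw [Finset.pair_comm, Finset.erase_insert]
    rw [Finset.mem_singleton]
    exact hwy
  rw [herase, ← Finset.insert_eq] at hnew
  have hfm := (Finset.mem_sdiff.mp hf).1
  rcases Finset.mem_insert.mp hfm with h | hfz
  · apply hxy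
    rw [Finset.pair_comm x y, ← h]
    exact hnew
  · have hz2 : f = z := Finset.mem_singleton.mp hfz
    apply hyz'
    rw [← hz2]
    exact hnew

lemma pcl_subset (h2 : ∀ C ∈ 𝒞, C.card = 2 ∧ C ⊆ G) (hex : ExchangeAxiom 𝒞)
    {x y : β} (hx : ¬ IsLoop 𝒞 x) (hxy : ({x, y} : Finset β) ∉ 𝒞) :
    pcl 𝒞 G x ⊆ pcl 𝒞 G y := by
  by_cases hxyeq : x = y
  · subst hxyeq; exact Finset.Subset.refl _
  intro z hz
  obtain ⟨hzG, hor⟩ := Finset.mem_filter.mp hz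
  refine Finset.mem_filter.mpr ⟨hzG, ?_⟩
  rcases hor with rfl | ⟨hzl, hxz⟩
  · exact Or.inr ⟨hx, fun h => hxy (Finset.pair_comm y z ▸ h)⟩
  · by_cases hzy : z = y
    · exact Or.inl hzy
    · refine Or.inr ⟨hzl, fun hmem => ?_⟩
      have hxz' : x ≠ z := by
        rintro rfl
        exact hxy (Finset.pair_comm y x ▸ hmem)
      exact rank2_trans_false h2 hex hmem hx hxyeq hxz'
        (fun h => hxy (Finset.pair_comm y x ▸ h)) hxz

lemma pcl_eq (h2 : ∀ C ∈ 𝒞, C.card = 2 ∧ C ⊆ G) (hex : ExchangeAxiom 𝒞)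
    {x y : β} (hx : ¬ IsLoop 𝒞 x) (hy : ¬ IsLoop 𝒞 y) (hxy : ({x, y} : Finset β) ∉ 𝒞) :
    pcl 𝒞 G x = pcl 𝒞 G y :=
  Finset.Subset.antisymm (pcl_subset h2 hex hx hxy)
    (pcl_subset h2 hex hy (fun h => hxy (Finset.pair_comm x y ▸ h)))

lemma rank2_mem_iff (h2 : ∀ C ∈ 𝒞, C.card = 2 ∧ C ⊆ G) (hex : ExchangeAxiom 𝒞)
    (D : Finset β) :
    D ∈ 𝒞 ↔ ∃ a b : β, a ≠ b ∧ ¬ IsLoop 𝒞 a ∧ ¬ IsLoop 𝒞 b ∧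
      prep 𝒞 G a ≠ prep 𝒞 G b ∧ D = {a, b} := by
  constructor
  · intro hD
    obtain ⟨a, b, hab, rfl⟩ := Finset.card_eq_two.mp (h2 _ hD).1
    have ha : ¬ IsLoop 𝒞 a := fun hl => hl _ hD (Finset.mem_insert_self _ _)
    have hb : ¬ IsLoop 𝒞 b :=
      fun hl => hl _ hD (Finset.mem_insert_of_mem (Finset.mem_singleton_self b))
    refine ⟨a, b, hab, ha, hb, ?_, rfl⟩
    intro heq
    have hma := prep_mem_pcl h2 ha
    have hmb : prep 𝒞 G a ∈ pcl 𝒞 G b := heq ▸ prep_mem_pcl h2 hb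
    have hora := (Finset.mem_filter.mp hma).2
    have horb := (Finset.mem_filter.mp hmb).2
    by_cases hma' : prep 𝒞 G a = a
    · rcases horb with hmb' | ⟨_, hbm⟩
      · exact hab (hma'.symm.trans hmb')
      · apply hbm
        rw [hma']
        rw [Finset.pair_comm] at hD
        exact hD
    · by_cases hmb' : prep 𝒞 G a = b
      · rcases hora with h | ⟨_, ham⟩
        · exact hma' h
        · apply ham
          rw [hmb']
          exact hD
      · rcases hora with h | ⟨hml, ham⟩
        · exact hma' h
        · rcases horb with h | ⟨_, hbm⟩
          · exact hmb' h
          · refine rank2_trans_false h2 hex hD hml hma' hmb' ham ?_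
            rw [Finset.pair_comm]
            exact hbm
  · rintro ⟨a, b, hab, ha, hb, hprep, rfl⟩
    by_contra hD
    apply hprep
    have hpcl : pcl 𝒞 G a = pcl 𝒞 G b := pcl_eq h2 hex ha hb hD
    have hNa : (pcl 𝒞 G a).Nonempty := ⟨a, self_mem_pcl h2 ha⟩
    have hNb : (pcl 𝒞 G b).Nonempty := ⟨b, self_mem_pcl h2 hb⟩
    rw [prep, dif_pos hNa, prep, dif_pos hNb]
    exact choose_congr hNa hNb hpcl

end RankTwo

lemma rank2_count {β : Type*} [Fintype β] (G : Finset β) :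
    ((Finset.univ : Finset (Finset (Finset β))).filter
      (fun 𝒞 => 𝒞.Nonempty ∧ (∀ C ∈ 𝒞, C.card = 2 ∧ C ⊆ G) ∧ ExchangeAxiom 𝒞)).card
      ≤ (G.card + 1) ^ G.card := by
  set Φ : Finset (Finset β) → ({x // x ∈ G} → Option {x // x ∈ G}) := fun 𝒞 x =>
    if IsLoop 𝒞 ↑x then none
    else some (if hm : prep 𝒞 G ↑x ∈ G then ⟨prep 𝒞 G ↑x, hm⟩ else x) with hΦ
  have main : ∀ 𝒞₁ 𝒞₂ : Finset (Finset β),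
      (∀ C ∈ 𝒞₁, C.card = 2 ∧ C ⊆ G) → ExchangeAxiom 𝒞₁ →
      (∀ C ∈ 𝒞₂, C.card = 2 ∧ C ⊆ G) → ExchangeAxiom 𝒞₂ →
      Φ 𝒞₁ = Φ 𝒞₂ → ∀ D, D ∈ 𝒞₁ → D ∈ 𝒞₂ := by
    intro 𝒞₁ 𝒞₂ h2a hexa h2b hexb heq D hD
    obtain ⟨a, b, hab, ha, hb, hprep, rfl⟩ := (rank2_mem_iff h2a hexa D).mp hD
    have haG : a ∈ G := nonloop_mem_ground h2a ha
    have hbG : b ∈ G := nonloop_mem_ground h2a hb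
    have key : ∀ (x : β) (hxG : x ∈ G), ¬ IsLoop 𝒞₁ x →
        ¬ IsLoop 𝒞₂ x ∧ prep 𝒞₁ G x = prep 𝒞₂ G x := by
      intro x hxG hx1
      have h := congrFun heq (⟨x, hxG⟩ : {x // x ∈ G})
      simp only [hΦ] at h
      rw [if_neg hx1] at h
      have hx2 : ¬ IsLoop 𝒞₂ x := by
        intro hx2
        rw [if_pos hx2] at h
        exact Option.some_ne_none _ h
      rw [if_neg hx2] at h
      refine ⟨hx2, ?_⟩
      have h1 := Option.some_injective _ h
      rw [dif_pos (prep_mem_ground h2a hx1), dif_pos (prep_mem_ground h2b hx2)] at h1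
      exact congrArg Subtype.val h1
    obtain ⟨ha2, hpa⟩ := key a haG ha
    obtain ⟨hb2, hpb⟩ := key b hbG hb
    refine (rank2_mem_iff h2b hexb _).mpr ⟨a, b, hab, ha2, hb2, ?_, rfl⟩
    rw [← hpa, ← hpb]
    exact hprep
  refine le_trans (Finset.card_le_card_of_injOn Φ (fun _ _ => Finset.mem_univ _) ?_) ?_
  · intro 𝒞₁ h1 𝒞₂ h2' heq
    simp only [Finset.coe_filter, Finset.mem_univ, true_and, Set.mem_setOf_eq] at h1 h2'
    obtain ⟨-, h2a, hexa⟩ := h1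
    obtain ⟨-, h2b, hexb⟩ := h2'
    ext D
    constructor
    · exact main _ _ h2a hexa h2b hexb heq D
    · exact main _ _ h2b hexb h2a hexa heq.symm D
  · rw [Finset.card_univ, Fintype.card_fun, Fintype.card_option, Fintype.card_coe]


lemma proj_card_le {n r : ℕ} (h2r : 2 ≤ r) (hrn : r ≤ n)
    (A : Finset (Fin n)) (hA : A.card = r - 2)
    (P : Finset (Finset (Fin n) → Bool))
    (hP1 : ∀ g ∈ P, ∀ B, g B = true → A ⊆ B ∧ B.card = r)
    (hP2 : ∀ g ∈ P, ∃ ℬ : Finset (Finset (Fin n)), ExchangeAxiom ℬ ∧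
      (∀ B, g B = true ↔ B ∈ ℬ ∧ A ⊆ B)) :
    P.card ≤ (n - r + 3) ^ (n - r + 3) := by
  letI : DecidableEq (Fin n) := fun a b => Classical.propDecidable (a = b)
  set G : Finset (Fin n) := Finset.univ \ A with hG
  have hGcard : G.card = n - r + 2 := by
    rw [hG, Finset.card_sdiff_of_subset (Finset.subset_univ A), Finset.card_univ, Fintype.card_fin, hA]
    omega
  set pf : Finset (Finset (Finset (Fin n))) := (Finset.univ.filter
      (fun 𝒞 => 𝒞.Nonempty ∧ (∀ C ∈ 𝒞, C.card = 2 ∧ C ⊆ G) ∧ ExchangeAxiom 𝒞)) with hpf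
  set dec : (Finset (Fin n) → Bool) → Finset (Finset (Fin n)) := fun g =>
    (Finset.univ.filter (fun B => g B = true)).image (fun B => B \ A) with hdec
  have hmemdec : ∀ g D, D ∈ dec g ↔ ∃ B, g B = true ∧ B \ A = D := by
    intro g D
    simp [hdec]
  -- dec is injective on P
  have hinj : Set.InjOn dec P := by
    intro g hg g' hg' hdeq
    have key : ∀ p q : Finset (Fin n) → Bool, p ∈ P → q ∈ P → dec p = dec q →
        ∀ B, p B = true → q B = true := by
      intro p q hp hq hpq B hB
      have hD : B \ A ∈ dec p := (hmemdec p _).mpr ⟨B, hB, rfl⟩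
      rw [hpq] at hD
      obtain ⟨B', hB', hBB⟩ := (hmemdec q _).mp hD
      have hsub1 := (hP1 p hp B hB).1
      have hsub2 := (hP1 q hq B' hB').1
      have hBeq : B' = B := by
        calc B' = B' \ A ∪ A := (Finset.sdiff_union_of_subset hsub2).symm
          _ = B \ A ∪ A := by rw [hBB]
          _ = B := Finset.sdiff_union_of_subset hsub1
      rwa [hBeq] at hB'
    funext B
    cases hgB : g B with
    | true =>
      exact (key g g' hg hg' hdeq B hgB).symm
    | false =>
      cases hg'B : g' B with
      | true => exact absurd (key g' g hg' hg hdeq.symm B hg'B) (by simp [hgB])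
      | false => rfl
  -- dec maps into insert ∅ pf
  have hmaps : ∀ g ∈ P, dec g ∈ insert ∅ pf := by
    intro g hg
    by_cases hne : dec g = ∅
    · rw [hne]; exact Finset.mem_insert_self _ _
    refine Finset.mem_insert_of_mem ?_
    rw [hpf, Finset.mem_filter]
    refine ⟨Finset.mem_univ _, Finset.nonempty_of_ne_empty hne, ?_, ?_⟩
    · intro C hC
      obtain ⟨B, hB, rfl⟩ := (hmemdec g C).mp hC
      obtain ⟨hAB, hBcard⟩ := hP1 g hg B hB
      constructor
      · rw [Finset.card_sdiff_of_subset hAB, hBcard, hA]; omega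
      · exact Finset.sdiff_subset_sdiff (Finset.subset_univ B) (Finset.Subset.refl A)
    · -- exchange axiom for the contraction
      obtain ⟨ℬ, hexB, hchar⟩ := hP2 g hg
      intro D hD D' hD' e he
      obtain ⟨B, hB, rfl⟩ := (hmemdec g D).mp hD
      obtain ⟨B', hB', rfl⟩ := (hmemdec g D').mp hD'
      have hAB : A ⊆ B := ((hchar B).mp hB).2
      have hAB' : A ⊆ B' := ((hchar B').mp hB').2
      have hBmem : B ∈ ℬ := ((hchar B).mp hB).1
      have hBmem' : B' ∈ ℬ := ((hchar B').mp hB').1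
      rw [Finset.mem_sdiff] at he
      obtain ⟨he1, he2⟩ := he
      rw [Finset.mem_sdiff] at he1
      obtain ⟨heB, heA⟩ := he1
      have heB' : e ∉ B' := by
        intro h
        exact he2 (Finset.mem_sdiff.mpr ⟨h, heA⟩)
      obtain ⟨f, hf, hnew⟩ := hexB B hBmem B' hBmem' e (Finset.mem_sdiff.mpr ⟨heB, heB'⟩)
      rw [Finset.mem_sdiff] at hf
      obtain ⟨hfB', hfB⟩ := hf
      have hfA : f ∉ A := fun h => hfB (hAB h)
      have hfe : f ≠ e := fun h => hfB (h ▸ heB)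
      refine ⟨f, ?_, ?_⟩
      · rw [Finset.mem_sdiff, Finset.mem_sdiff, Finset.mem_sdiff]
        exact ⟨⟨hfB', hfA⟩, fun h => hfB h.1⟩
      · have hchar2 : (B.erase e ∪ {f}) ∈ ℬ ∧ A ⊆ B.erase e ∪ {f} := by
          refine ⟨hnew, ?_⟩
          refine Finset.Subset.trans ?_ Finset.subset_union_left
          rw [Finset.subset_erase]
          exact ⟨hAB, heA⟩
        have hg2 : g (B.erase e ∪ {f}) = true := (hchar _).mpr hchar2
        refine (hmemdec g _).mpr ⟨B.erase e ∪ {f}, hg2, ?_⟩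
        ext t
        simp only [Finset.mem_sdiff, Finset.mem_union, Finset.mem_erase,
          Finset.mem_singleton]
        constructor
        · rintro ⟨h1 | h2, h3⟩
          · exact Or.inl ⟨h1.1, h1.2, h3⟩
          · exact Or.inr h2
        · rintro (⟨h1, h2, h3⟩ | h4)
          · exact ⟨Or.inl ⟨h1, h2⟩, h3⟩
          · exact ⟨Or.inr h4, h4 ▸ hfA⟩
  calc P.card ≤ (insert ∅ pf).card := Finset.card_le_card_of_injOn dec hmaps hinj
    _ ≤ pf.card + 1 := Finset.card_insert_le _ _
    _ ≤ (G.card + 1) ^ G.card + 1 := by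
        have h := rank2_count G
        rw [← hpf] at h
        omega
    _ ≤ (n - r + 3) ^ (n - r + 3) := by
        rw [hGcard, show n - r + 2 + 1 = n - r + 3 from by omega]
        have h1 : (1:ℕ) ≤ (n - r + 3) ^ (n - r + 2) := Nat.one_le_pow _ _ (by omega)
        have h2 : (n - r + 3) ^ (n - r + 3) = (n - r + 3) ^ (n - r + 2) * (n - r + 3) := by
          rw [← pow_succ]
        nlinarith [h1, h2]


set_option maxHeartbeats 2000000 in
theorem key_count (n r : ℕ) (h2r : 2 ≤ r) (hrn : r ≤ n) :
    (matroidCount n r + 1) ^ (r.choose 2) ≤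
      ((n - r + 3) ^ (n - r + 3)) ^ (n.choose (r - 2)) := by
  set ind : Finset (Finset (Fin n)) → (Finset (Fin n) → Bool) :=
    fun ℬ B => if B ∈ ℬ then true else false with hind
  set Mset := (Finset.univ.filter (fun ℬ : Finset (Finset (Fin n)) =>
    ℬ.Nonempty ∧ (∀ B ∈ ℬ, B.card = r) ∧ ExchangeAxiom ℬ)) with hMset
  have hMcard : Mset.card = matroidCount n r := rfl
  set F := insert (fun _ => false : Finset (Fin n) → Bool) (Mset.image ind) with hF
  have hindinj : Function.Injective ind := by
    intro a b h
    ext B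
    constructor
    · intro hB
      by_contra hB'
      have h1 : (if B ∈ a then true else false) = (if B ∈ b then true else false) :=
        congrFun h B
      rw [if_pos hB, if_neg hB'] at h1
      exact Bool.noConfusion h1
    · intro hB
      by_contra hB'
      have h1 : (if B ∈ a then true else false) = (if B ∈ b then true else false) :=
        congrFun h B
      rw [if_neg hB', if_pos hB] at h1
      exact Bool.noConfusion h1
  have hnm : (fun _ => false : Finset (Fin n) → Bool) ∉ Mset.image ind := by
    intro hmem
    obtain ⟨ℬ, hℬ, hcontra⟩ := Finset.mem_image.mp hmem
    obtain ⟨B₀, hB₀⟩ := (Finset.mem_filter.mp hℬ).2.1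
    have h1 : (if B₀ ∈ ℬ then true else false) = false := congrFun hcontra B₀
    rw [if_pos hB₀] at h1
    exact Bool.noConfusion h1
  have hFcard : F.card = matroidCount n r + 1 := by
    rw [hF, Finset.card_insert_of_notMem hnm, Finset.card_image_of_injective _ hindinj,
      hMcard]
  set fam : Finset (Fin n) → Finset (Finset (Fin n)) :=
    fun A => Finset.univ.filter (fun B => A ⊆ B ∧ B.card = r) with hfam
  set I := Finset.univ.filter (fun B : Finset (Fin n) => B.card = r) with hI
  set J := Finset.univ.filter (fun A : Finset (Fin n) => A.card = r - 2) with hJ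
  have hk : 0 < r.choose 2 := Nat.choose_pos h2r
  have hcov : ∀ B ∈ I, (J.filter (fun j => B ∈ fam j)).card = r.choose 2 := by
    intro B hB
    have hBcard : B.card = r := (Finset.mem_filter.mp hB).2
    have heq : J.filter (fun j => B ∈ fam j) = Finset.powersetCard (r - 2) B := by
      ext A
      simp only [hJ, hfam, Finset.mem_filter, Finset.mem_univ, true_and,
        Finset.mem_powersetCard]
      constructor
      · rintro ⟨h1, h2, _⟩
        exact ⟨h2, h1⟩
      · rintro ⟨h1, h2⟩
        exact ⟨h2, h1, hBcard⟩
    rw [heq, Finset.card_powersetCard, hBcard]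
    exact Nat.choose_symm h2r
  have hsupp : ∀ f ∈ F, ∀ B, B ∉ I → f B = false := by
    intro f hf B hB
    rw [hF, Finset.mem_insert] at hf
    rcases hf with rfl | hf
    · rfl
    obtain ⟨ℬ, hℬ, rfl⟩ := Finset.mem_image.mp hf
    show (if B ∈ ℬ then true else false) = false
    by_cases hBm : B ∈ ℬ
    · exfalso
      apply hB
      rw [hI, Finset.mem_filter]
      exact ⟨Finset.mem_univ _, (Finset.mem_filter.mp hℬ).2.2.1 B hBm⟩
    · rw [if_neg hBm]
  have hsh := shearer fam (r.choose 2) hk I J F hcov hsupp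
  have hJcard : J.card = n.choose (r - 2) := by
    have heq : J = Finset.powersetCard (r - 2) Finset.univ := by
      ext A
      simp [hJ, Finset.mem_powersetCard]
    rw [heq, Finset.card_powersetCard, Finset.card_univ, Fintype.card_fin]
  have target : ((F.card : ℝ≥0)) ^ (r.choose 2)
      ≤ (((n - r + 3) ^ (n - r + 3) : ℕ) : ℝ≥0) ^ (n.choose (r - 2)) := by
    refine le_trans hsh ?_
    rw [← hJcard, ← Finset.prod_const]
    refine Finset.prod_le_prod' ?_
    intro A hA
    have hAcard : A.card = r - 2 := (Finset.mem_filter.mp hA).2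
    rw [Nat.cast_le]
    refine proj_card_le h2r hrn A hAcard _ ?_ ?_
    · intro g hg B hgB
      obtain ⟨f, hf, rfl⟩ := Finset.mem_image.mp hg
      have hgB' : (if B ∈ fam A then f B else false) = true := hgB
      by_cases hBf : B ∈ fam A
      · rw [hfam] at hBf
        exact (Finset.mem_filter.mp hBf).2
      · rw [if_neg hBf] at hgB'
        exact Bool.noConfusion hgB'
    · intro g hg
      obtain ⟨f, hf, rfl⟩ := Finset.mem_image.mp hg
      rw [hF, Finset.mem_insert] at hf
      rcases hf with rfl | hf
      · refine ⟨∅, ?_, ?_⟩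
        · intro B hB
          exact absurd hB (Finset.notMem_empty _)
        · intro B
          constructor
          · intro h
            have h' : (if B ∈ fam A then (false : Bool) else false) = true := h
            rw [ite_self] at h'
            exact Bool.noConfusion h'
          · rintro ⟨h, -⟩
            exact absurd h (Finset.notMem_empty _)
      · obtain ⟨ℬ, hℬ, rfl⟩ := Finset.mem_image.mp hf
        obtain ⟨hne, hcards, hex⟩ := (Finset.mem_filter.mp hℬ).2
        refine ⟨ℬ, hex, ?_⟩
        intro B
        constructor
        · intro h
          have h' : (if B ∈ fam A then ind ℬ B else false) = true := h
          by_cases hBf : B ∈ fam A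
          · rw [if_pos hBf] at h'
            have h'' : (if B ∈ ℬ then true else false) = true := h'
            by_cases hBm : B ∈ ℬ
            · refine ⟨hBm, ?_⟩
              rw [hfam] at hBf
              exact ((Finset.mem_filter.mp hBf).2).1
            · rw [if_neg hBm] at h''
              exact Bool.noConfusion h''
          · rw [if_neg hBf] at h'
            exact Bool.noConfusion h'
        · rintro ⟨hBm, hAB⟩
          have hBf : B ∈ fam A := by
            rw [hfam, Finset.mem_filter]
            exact ⟨Finset.mem_univ _, hAB, hcards B hBm⟩
          show (if B ∈ fam A then ind ℬ B else false) = true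
          rw [if_pos hBf]
          show (if B ∈ ℬ then true else false) = true
          rw [if_pos hBm]
  rw [hFcard] at target
  exact_mod_cast target

end MatroidCountAux

theorem log_matroidCount_le (n r : ℕ) (h2r : 2 ≤ r) (hrn : r ≤ n) :
    Real.logb 2 (matroidCount n r) ≤
      (2 * Real.logb 2 (n + 1) / (n + 2)) * ((n + 2).choose r : ℝ) := by
  have key := MatroidCountAux.key_count n r h2r hrn
  set m := matroidCount n r with hm
  set b := n - r + 3 with hb
  set N := n.choose (r - 2) with hN
  set k := r.choose 2 with hk
  have hkpos : 0 < k := Nat.choose_pos h2r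
  -- log of key inequality
  have hkeyR : ((m + 1 : ℕ) : ℝ) ^ k ≤ ((b : ℝ) ^ b) ^ N := by exact_mod_cast key
  have hmpos : (0 : ℝ) < ((m + 1 : ℕ) : ℝ) ^ k := by positivity
  have hlog1 : Real.logb 2 (((m + 1 : ℕ) : ℝ) ^ k) ≤ Real.logb 2 (((b : ℝ) ^ b) ^ N) :=
    Real.logb_le_logb_of_le one_lt_two hmpos hkeyR
  rw [Real.logb_pow, Real.logb_pow, Real.logb_pow] at hlog1
  -- hlog1 : k * logb 2 (m+1) ≤ N * (b * logb 2 b)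
  have hble : (b : ℝ) ≤ (n : ℝ) + 1 := by
    have : b ≤ n + 1 := by omega
    exact_mod_cast this
  have hbpos : (0 : ℝ) < (b : ℝ) := by
    have : 0 < b := by omega
    exact_mod_cast this
  have hlogb_nonneg : 0 ≤ Real.logb 2 (b : ℝ) := by
    apply Real.logb_nonneg one_lt_two
    have : 1 ≤ b := by omega
    exact_mod_cast this
  have hlogble : Real.logb 2 (b : ℝ) ≤ Real.logb 2 ((n : ℝ) + 1) :=
    Real.logb_le_logb_of_le one_lt_two hbpos hble
  have hstep : (N : ℝ) * ((b : ℝ) * Real.logb 2 (b : ℝ))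
      ≤ (N : ℝ) * (((n : ℝ) + 1) * Real.logb 2 ((n : ℝ) + 1)) := by
    apply mul_le_mul_of_nonneg_left _ (Nat.cast_nonneg N)
    apply mul_le_mul hble hlogble hlogb_nonneg (by positivity)
  have hmain : (k : ℝ) * Real.logb 2 ((m + 1 : ℕ) : ℝ)
      ≤ (N : ℝ) * (((n : ℝ) + 1) * Real.logb 2 ((n : ℝ) + 1)) := le_trans hlog1 hstep
  -- the combinatorial identity
  have idt1 : (n + 1) * n.choose (r - 2) = (r - 1) * (n + 1).choose (r - 1) := by
    have h := Nat.add_one_mul_choose_eq n (r - 2)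
    rw [show r - 2 + 1 = r - 1 from by omega] at h
    linear_combination h
  have idt2 : (n + 2) * (n + 1).choose (r - 1) = r * (n + 2).choose r := by
    have h := Nat.add_one_mul_choose_eq (n + 1) (r - 1)
    rw [show r - 1 + 1 = r from by omega] at h
    linear_combination h
  have k2 : 2 * k = r * (r - 1) := by
    rw [hk, Nat.choose_two_right]
    have hdvd : 2 ∣ r * (r - 1) := by
      have heven : Even ((r - 1) * ((r - 1) + 1)) := Nat.even_mul_succ_self (r - 1)
      rw [show r - 1 + 1 = r from by omega] at heven
      rw [mul_comm]
      exact heven.two_dvd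
    omega
  have idt : (n + 2) * ((n + 1) * N) = (2 * k) * (n + 2).choose r := by
    rw [hN, idt1, k2]
    calc (n + 2) * ((r - 1) * (n + 1).choose (r - 1))
        = (r - 1) * ((n + 2) * (n + 1).choose (r - 1)) := by ring
      _ = (r - 1) * (r * (n + 2).choose r) := by rw [idt2]
      _ = r * (r - 1) * (n + 2).choose r := by ring
  have idtR : ((n : ℝ) + 2) * (((n : ℝ) + 1) * (N : ℝ))
      = (2 * (k : ℝ)) * ((n + 2).choose r : ℝ) := by exact_mod_cast idt
  -- final assembly
  have hkR : (0 : ℝ) < (k : ℝ) := by exact_mod_cast hkpos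
  have hlast : Real.logb 2 ((m + 1 : ℕ) : ℝ)
      ≤ (2 * Real.logb 2 ((n : ℝ) + 1) / ((n : ℝ) + 2)) * ((n + 2).choose r : ℝ) := by
    rw [← le_div_iff₀' hkR] at hmain
    refine le_trans hmain ?_
    rw [div_le_iff₀ hkR]
    have hn2pos : (0 : ℝ) < (n : ℝ) + 2 := by positivity
    rw [div_mul_eq_mul_div, div_mul_eq_mul_div, le_div_iff₀ hn2pos]
    have hLnn : 0 ≤ Real.logb 2 ((n : ℝ) + 1) := by
      apply Real.logb_nonneg one_lt_two
      have h0 : (0:ℝ) ≤ (n:ℝ) := Nat.cast_nonneg n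
      linarith
    nlinarith [idtR, hLnn]
  have hstep0 : Real.logb 2 (m : ℝ) ≤ Real.logb 2 ((m + 1 : ℕ) : ℝ) := by
    rcases Nat.eq_zero_or_pos m with h0 | hpos
    · rw [h0]
      norm_num
    · apply Real.logb_le_logb_of_le one_lt_two (by exact_mod_cast hpos)
      push_cast
      linarith
  calc Real.logb 2 (m : ℝ) ≤ Real.logb 2 ((m + 1 : ℕ) : ℝ) := hstep0
    _ ≤ _ := hlast
end
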